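/- arXiv:1807.07166 — 4 statements merged into one kernel-verified Lean document; each statement's English description precedes it below -/
import Mathlib

section
/- Let n ≥ 2 and let X be a Cantor set contained in the unit sphere S^n (the unit sphere of ℝ^{n+1}). Then the complement S^n \ X is a connected subset of S^n. -/
noncomputable section

open Metric Set Complex

namespace CantorSphereProof

lemma const_of_int_values {T : Type*} [TopologicalSpace T] {s : Set T}
    (hs : IsPreconnected s) {f : T → ℝ} (hf : ContinuousOn f s)
    (hval : ∀ x ∈ s, ∃ k : ℤ, f x = 2 * Real.pi * k) :
    ∀ x ∈ s, ∀ y ∈ s, f x = f y := by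
  have key : ∀ x ∈ s, ∀ y ∈ s, f x < f y → False := by
    intro x hx y hy hlt
    obtain ⟨k, hk⟩ := hval x hx
    obtain ⟨m, hm⟩ := hval y hy
    have hkm : k < m := by
      by_contra h
      push_neg at h
      have h' : (m : ℝ) ≤ k := by exact_mod_cast h
      nlinarith [Real.pi_pos]
    have hkm' : (k : ℝ) + 1 ≤ m := by exact_mod_cast hkm
    have hc : (2 * Real.pi * k + Real.pi) ∈ Icc (f x) (f y) := by
      constructor
      · nlinarith [Real.pi_pos]
      · nlinarith [Real.pi_pos]
    obtain ⟨z, hz, hfz⟩ := hs.intermediate_value hx hy hf hc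
    obtain ⟨j, hj⟩ := hval z hz
    rw [hj] at hfz
    have h2 : Real.pi * (2 * j) = Real.pi * (2 * k + 1) := by linarith
    have h3 : (2 * j : ℝ) = 2 * k + 1 := mul_left_cancel₀ Real.pi_ne_zero h2
    have h4 : (2 * j : ℤ) = 2 * k + 1 := by exact_mod_cast h3
    omega
  intro x hx y hy
  rcases lt_trichotomy (f x) (f y) with h | h | h
  · exact absurd h fun h => key x hx y hy h
  · exact h
  · exact absurd h fun h => key y hy x hx h

lemma continuousOn_of_closed_pieces {T β : Type*} [TopologicalSpace T] [TopologicalSpace β]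
    {s F₁ F₂ : Set T} (h1 : IsClosed F₁) (h2 : IsClosed F₂) (hcov : s ⊆ F₁ ∪ F₂)
    {f g φ : T → β} (hf : ContinuousOn f (s ∩ F₁)) (hg : ContinuousOn g (s ∩ F₂))
    (hagree : ∀ x ∈ (s ∩ F₁) ∩ F₂, f x = g x)
    (hφf : ∀ x ∈ F₁, φ x = f x) (hφg : ∀ x ∉ F₁, φ x = g x) :
    ContinuousOn φ s := by
  intro x hx
  have hsub : s ⊆ (s ∩ F₁) ∪ (s \ F₁) := by
    intro y hy; by_cases h : y ∈ F₁
    · exact Or.inl ⟨hy, h⟩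
    · exact Or.inr ⟨hy, h⟩
  by_cases hx1 : x ∈ F₁
  · have c1 : ContinuousWithinAt φ (s ∩ F₁) x :=
      (hf x ⟨hx, hx1⟩).congr (fun y hy => hφf y hy.2) (hφf x hx1)
    have c2 : ContinuousWithinAt φ (s \ F₁) x := by
      by_cases hx2 : x ∈ F₂
      · have hmono : s \ F₁ ⊆ s ∩ F₂ := fun y hy => ⟨hy.1, (hcov hy.1).resolve_left hy.2⟩
        refine ((hg x ⟨hx, hx2⟩).mono hmono).congr (fun y hy => hφg y hy.2) ?_
        rw [hφf x hx1]; exact hagree x ⟨⟨hx, hx1⟩, hx2⟩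
      · apply continuousWithinAt_of_notMem_closure
        intro hmem
        have hsubc : s \ F₁ ⊆ F₂ := fun y hy => (hcov hy.1).resolve_left hy.2
        have := closure_mono hsubc hmem
        rw [h2.closure_eq] at this
        exact hx2 this
    exact (c1.union c2).mono hsub
  · have hx2 : x ∈ F₂ := (hcov hx).resolve_left hx1
    have c1 : ContinuousWithinAt φ (s ∩ F₁) x := by
      apply continuousWithinAt_of_notMem_closure
      intro hmem
      have := closure_mono (inter_subset_right (s := s)) hmem
      rw [h1.closure_eq] at this
      exact hx1 this
    have c2 : ContinuousWithinAt φ (s \ F₁) x := by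
      have hmono : s \ F₁ ⊆ s ∩ F₂ := fun y hy => ⟨hy.1, (hcov hy.1).resolve_left hy.2⟩
      exact ((hg x ⟨hx, hx2⟩).mono hmono).congr (fun y hy => hφg y hy.2) (hφg x hx1)
    exact (c1.union c2).mono hsub

lemma unit_ne_neg_one_mem_slitPlane {z : ℂ} (hz : ‖z‖ = 1) (hz1 : z ≠ -1) :
    z ∈ slitPlane := by
  rw [Complex.mem_slitPlane_iff]
  by_contra h
  push_neg at h
  obtain ⟨hre, him⟩ := h
  have hsq : z.re ^ 2 + z.im ^ 2 = 1 := by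
    have h1 : ‖z‖ = 1 := hz
    have h2 : Complex.normSq z = 1 := by
      rw [← Complex.sq_norm, h1]; norm_num
    rw [Complex.normSq_apply] at h2; nlinarith
  rw [him] at hsq
  have : z.re = -1 := by nlinarith
  exact hz1 (Complex.ext (by simp [this]) (by simp [him]))

lemma exp_arg_unit {z : ℂ} (hz : ‖z‖ = 1) : Complex.exp (Complex.arg z * I) = z := by
  have := Complex.norm_mul_exp_arg_mul_I z
  rw [hz] at this
  simpa using this

/-- Lifting a circle-valued map along a "contraction" of a compact set. -/
lemma exists_lift_of_contraction {T : Type*} [MetricSpace T] {K : Set T} (hK : IsCompact K)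
    {f : T → ℂ} (hf : ContinuousOn f K) (hunit : ∀ x ∈ K, ‖f x‖ = 1)
    {q : ℝ × T → T} (hq : ContinuousOn q (Icc (0:ℝ) 1 ×ˢ K))
    (hqmem : ∀ p ∈ (Icc (0:ℝ) 1 ×ˢ K), q p ∈ K)
    {x₀ : T} (hq0 : ∀ x ∈ K, q (0, x) = x₀) (hq1 : ∀ x ∈ K, q (1, x) = x) :
    ∃ G : T → ℝ, ContinuousOn G K ∧ ∀ x ∈ K, f x = Complex.exp (G x * I) := by
  rcases K.eq_empty_or_nonempty with hKe | ⟨xK, hxK⟩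
  · exact ⟨0, by rw [hKe]; exact continuousOn_empty _, by rw [hKe]; simp⟩
  set P : Set (ℝ × T) := Icc (0:ℝ) 1 ×ˢ K with hP
  have hPc : IsCompact P := isCompact_Icc.prod hK
  set h : ℝ × T → ℂ := fun p => f (q p) with hh
  have hhc : ContinuousOn h P := hf.comp hq hqmem
  have hhu : ∀ p ∈ P, ‖h p‖ = 1 := fun p hp => hunit _ (hqmem p hp)
  have hx₀K : x₀ ∈ K := by
    rw [← hq0 xK hxK]
    exact hqmem _ ⟨⟨le_rfl, zero_le_one⟩, hxK⟩
  have huc : UniformContinuousOn h P := hPc.uniformContinuousOn_of_continuous hhc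
  rw [Metric.uniformContinuousOn_iff] at huc
  obtain ⟨δ, hδ, hmod⟩ := huc 2 (by norm_num)
  obtain ⟨N, hN⟩ := exists_nat_gt (1 / δ)
  have hNpos : 0 < (N : ℝ) := lt_trans (by positivity) hN
  have hstep : (1 : ℝ) / N < δ := by
    rw [div_lt_iff₀ hNpos]
    rw [div_lt_iff₀ hδ] at hN
    nlinarith
  have hmemP : ∀ (k : ℕ), k ≤ N → ∀ x ∈ K, ((k : ℝ) / N, x) ∈ P := by
    intro k hk x hx
    refine ⟨⟨by positivity, ?_⟩, hx⟩
    rw [div_le_one hNpos]; exact_mod_cast hk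
  set w : ℕ → T → ℂ := fun k x => h (((k + 1 : ℕ) : ℝ) / N, x) * (starRingEnd ℂ) (h ((k : ℝ) / N, x))
    with hw
  have hwu : ∀ (k : ℕ), k < N → ∀ x ∈ K, ‖w k x‖ = 1 := by
    intro k hk x hx
    rw [hw]
    simp only [norm_mul, RCLike.norm_conj]
    rw [hhu _ (hmemP (k+1) hk x hx), hhu _ (hmemP k (le_of_lt hk) x hx)]
    norm_num
  have hwne : ∀ (k : ℕ), k < N → ∀ x ∈ K, w k x ≠ -1 := by
    intro k hk x hx heq
    have hd : dist ((((k + 1 : ℕ) : ℝ) / N, x) : ℝ × T) (((k : ℝ) / N, x)) < δ := by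
      rw [Prod.dist_eq]
      simp only [dist_self]
      have hdd : dist (((k + 1 : ℕ) : ℝ) / N) ((k : ℝ) / N) = 1 / N := by
        rw [Real.dist_eq, div_sub_div_same]
        have h1 : ((k + 1 : ℕ) : ℝ) - ((k : ℕ) : ℝ) = 1 := by push_cast; ring
        rw [h1, _root_.abs_of_nonneg (by positivity : (0:ℝ) ≤ 1 / N)]
      rw [hdd, max_eq_left (by positivity)]
      exact hstep
    have hcontra := hmod _ (hmemP (k+1) hk x hx) _ (hmemP k (le_of_lt hk) x hx) hd
    set h₁ := h (((k + 1 : ℕ) : ℝ) / N, x) with hh1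
    set h₂ := h ((k : ℝ) / N, x) with hh2
    have hu1 : ‖h₁‖ = 1 := hhu _ (hmemP (k+1) hk x hx)
    have hu2 : ‖h₂‖ = 1 := hhu _ (hmemP k (le_of_lt hk) x hx)
    have hns : Complex.normSq h₂ = 1 := by
      rw [Complex.normSq_eq_norm_sq, hu2]; norm_num
    have hcc : (starRingEnd ℂ) h₂ * h₂ = 1 := by
      rw [mul_comm, Complex.mul_conj, hns]; norm_num
    have heq2 : h₁ = -h₂ := by
      calc h₁ = h₁ * ((starRingEnd ℂ) h₂ * h₂) := by rw [hcc, mul_one]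
        _ = (h₁ * (starRingEnd ℂ) h₂) * h₂ := by ring
        _ = -1 * h₂ := by rw [← heq]
        _ = -h₂ := by ring
    rw [dist_eq_norm, heq2] at hcontra
    have hnn : ‖-h₂ - h₂‖ = 2 := by
      have he : -h₂ - h₂ = -(2 * h₂) := by ring
      rw [he, norm_neg, norm_mul, hu2, mul_one]
      simp
    rw [hnn] at hcontra
    exact lt_irrefl _ hcontra
  have hwslit : ∀ (k : ℕ), k < N → ∀ x ∈ K, w k x ∈ slitPlane :=
    fun k hk x hx => unit_ne_neg_one_mem_slitPlane (hwu k hk x hx) (hwne k hk x hx)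
  have hhcont : ∀ (k : ℕ), k ≤ N → ContinuousOn (fun x => h ((k : ℝ) / N, x)) K := by
    intro k hk
    apply hhc.comp
    · exact Continuous.continuousOn (by fun_prop)
    · exact fun x hx => hmemP k hk x hx
  have hwcont : ∀ (k : ℕ), k < N → ContinuousOn (fun x => w k x) K := by
    intro k hk
    exact (hhcont (k+1) hk).mul (RCLike.continuous_conj.comp_continuousOn (hhcont k (le_of_lt hk)))
  refine ⟨fun x => Complex.arg (f x₀) + ∑ k ∈ Finset.range N, Complex.arg (w k x), ?_, ?_⟩
  · apply ContinuousOn.add continuousOn_const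
    apply continuousOn_finset_sum
    intro k hk x hx
    exact (Complex.continuousAt_arg (hwslit k (Finset.mem_range.1 hk) x hx)).comp_continuousWithinAt
      (hwcont k (Finset.mem_range.1 hk) x hx)
  · have key : ∀ (m : ℕ), m ≤ N → ∀ x ∈ K,
        Complex.exp (((Complex.arg (f x₀) + ∑ k ∈ Finset.range m, Complex.arg (w k x) : ℝ) : ℂ) * I)
          = h ((m : ℝ) / N, x) := by
      intro m
      induction m with
      | zero =>
        intro _ x hx
        simp only [Finset.range_zero, Finset.sum_empty, add_zero, Nat.cast_zero, zero_div]
        have hz : h ((0 : ℝ), x) = f x₀ := by rw [hh]; simp only; rw [hq0 x hx]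
        rw [hz]
        exact exp_arg_unit (hunit _ hx₀K)
      | succ m ih =>
        intro hm x hx
        have hm' : m ≤ N := by omega
        have hmN : m < N := by omega
        have hsum : ((Complex.arg (f x₀) + ∑ k ∈ Finset.range (m+1), Complex.arg (w k x) : ℝ) : ℂ)
            = ((Complex.arg (f x₀) + ∑ k ∈ Finset.range m, Complex.arg (w k x) : ℝ) : ℂ)
              + ((Complex.arg (w m x) : ℝ) : ℂ) := by
          rw [Finset.sum_range_succ]; push_cast; ring
        rw [hsum, add_mul, Complex.exp_add, ih hm' x hx, exp_arg_unit (hwu m hmN x hx)]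
        have hns : Complex.normSq (h ((m : ℝ) / N, x)) = 1 := by
          rw [Complex.normSq_eq_norm_sq, hhu _ (hmemP m hm' x hx)]; norm_num
        rw [hw]
        calc h ((m : ℝ) / N, x) *
              (h (((m + 1 : ℕ) : ℝ) / N, x) * (starRingEnd ℂ) (h ((m : ℝ) / N, x)))
            = h (((m + 1 : ℕ) : ℝ) / N, x) *
              (h ((m : ℝ) / N, x) * (starRingEnd ℂ) (h ((m : ℝ) / N, x))) := by ring
          _ = h (((m + 1 : ℕ) : ℝ) / N, x) := by
              rw [Complex.mul_conj, hns, Complex.ofReal_one, mul_one]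
    intro x hx
    have hkey := key N le_rfl x hx
    rw [div_self (ne_of_gt hNpos)] at hkey
    have h1 : h ((1 : ℝ), x) = f x := by rw [hh]; simp only; rw [hq1 x hx]
    rw [h1] at hkey
    exact hkey.symm

section Lists

variable {α : Type*}

def unions : List (Set α) → Set α
  | [] => ∅
  | s :: L => s ∪ unions L

lemma mem_unions {L : List (Set α)} {x : α} : x ∈ unions L ↔ ∃ s ∈ L, x ∈ s := by
  induction L with
  | nil => simp [unions]
  | cons s L ih => simp [unions, ih]

lemma unions_compact [TopologicalSpace α] {L : List (Set α)} (h : ∀ s ∈ L, IsCompact s) :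
    IsCompact (unions L) := by
  induction L with
  | nil => exact isCompact_empty
  | cons s L ih =>
    exact (h s (List.mem_cons_self)).union (ih fun t ht => h t (List.mem_cons_of_mem _ ht))

lemma disjoint_unions {L : List (Set α)} {s : Set α} (h : ∀ t ∈ L, Disjoint s t) :
    Disjoint s (unions L) := by
  induction L with
  | nil => exact disjoint_bot_right
  | cons t L ih =>
    rw [show unions (t :: L) = t ∪ unions L from rfl, disjoint_union_right]
    exact ⟨h t (List.mem_cons_self), ih fun r hr => h r (List.mem_cons_of_mem _ hr)⟩

def djfy : List (Set α) → List (Set α)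
  | [] => []
  | s :: L => s :: (djfy L).map (· \ s)

lemma djfy_subset {L : List (Set α)} : ∀ W ∈ djfy L, ∃ s ∈ L, W ⊆ s := by
  induction L with
  | nil => simp [djfy]
  | cons s L ih =>
    intro W hW
    rcases List.mem_cons.1 hW with rfl | hW
    · exact ⟨W, List.mem_cons_self, subset_rfl⟩
    · rcases List.mem_map.1 hW with ⟨W', hW', rfl⟩
      obtain ⟨t, ht, hsub⟩ := ih W' hW'
      exact ⟨t, List.mem_cons_of_mem _ ht, diff_subset.trans hsub⟩

lemma unions_map_diff (L : List (Set α)) (s : Set α) :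
    unions (L.map (· \ s)) = unions L \ s := by
  induction L with
  | nil => simp [unions]
  | cons t L ih =>
    show (t \ s) ∪ unions (L.map (· \ s)) = (t ∪ unions L) \ s
    rw [ih, union_diff_distrib]

lemma djfy_unions {L : List (Set α)} : unions (djfy L) = unions L := by
  induction L with
  | nil => rfl
  | cons s L ih =>
    show s ∪ unions ((djfy L).map (· \ s)) = s ∪ unions L
    rw [unions_map_diff, ih, union_diff_self]

lemma djfy_pairwise {L : List (Set α)} : (djfy L).Pairwise Disjoint := by
  induction L with
  | nil => exact List.Pairwise.nil
  | cons s L ih =>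
    refine List.Pairwise.cons ?_ ?_
    · intro W hW
      rcases List.mem_map.1 hW with ⟨W', _, rfl⟩
      exact disjoint_sdiff_self_right
    · exact List.pairwise_map.2 (ih.imp fun hAB => hAB.mono diff_subset diff_subset)

lemma djfy_clopen [TopologicalSpace α] {L : List (Set α)} (h : ∀ s ∈ L, IsClopen s) :
    ∀ W ∈ djfy L, IsClopen W := by
  induction L with
  | nil => simp [djfy]
  | cons s L ih =>
    intro W hW
    rcases List.mem_cons.1 hW with rfl | hW
    · exact h W (List.mem_cons_self)
    · rcases List.mem_map.1 hW with ⟨W', hW', rfl⟩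
      exact (ih (fun t ht => h t (List.mem_cons_of_mem _ ht)) W' hW').diff
        (h s (List.mem_cons_self))

lemma unions_map_image {β : Type*} (f : α → β) (L : List (Set α)) :
    unions (L.map (fun W => f '' W)) = f '' unions L := by
  induction L with
  | nil => simp [unions]
  | cons s L ih =>
    show f '' s ∪ unions (L.map (fun W => f '' W)) = f '' (s ∪ unions L)
    rw [ih, image_union]

end Lists

section SphereGeometry

lemma seg_ne_zero {F : Type*} [NormedAddCommGroup F] [NormedSpace ℝ F] {x y : F}
    (hx : ‖x‖ = 1) (hy : ‖y‖ = 1) (hxy : x ≠ -y) {t : ℝ} (ht : t ∈ Icc (0:ℝ) 1) :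
    (1 - t) • x + t • y ≠ 0 := by
  intro h0
  have h1 : (1 - t) • x = t • (-y) := by
    rw [smul_neg]
    have := eq_neg_of_add_eq_zero_left h0
    rw [this]
  have h2 : ‖(1 - t) • x‖ = ‖t • (-y)‖ := by rw [h1]
  rw [norm_smul, norm_smul, hx, norm_neg, hy, mul_one, mul_one, Real.norm_eq_abs,
    Real.norm_eq_abs, _root_.abs_of_nonneg (by linarith [ht.2] : (0:ℝ) ≤ 1 - t),
    _root_.abs_of_nonneg ht.1] at h2
  have htt : t = 1/2 := by linarith
  apply hxy
  have h3 : (1/2 : ℝ) • x = (1/2 : ℝ) • (-y) := by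
    rw [← htt]
    calc t • x = (1 - t) • x := by rw [htt]; norm_num
      _ = t • (-y) := h1
  exact smul_right_injective F (by norm_num : (1/2 : ℝ) ≠ 0) h3

lemma joinedIn_arc {F : Type*} [NormedAddCommGroup F] [NormedSpace ℝ F] {s : Set F} {x y : F}
    (hx : ‖x‖ = 1) (hy : ‖y‖ = 1) (hxy : x ≠ -y)
    (hmem : ∀ t ∈ Icc (0:ℝ) 1, ‖(1-t) • x + t • y‖⁻¹ • ((1-t) • x + t • y) ∈ s) :
    JoinedIn s x y := by
  have hwc : Continuous fun t : unitInterval => (1 - (t:ℝ)) • x + (t:ℝ) • y := by fun_prop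
  have hnz : ∀ t : unitInterval, ‖(1 - (t:ℝ)) • x + (t:ℝ) • y‖ ≠ 0 :=
    fun t => norm_ne_zero_iff.2 (seg_ne_zero hx hy hxy t.2)
  have hcont : Continuous fun t : unitInterval =>
      ‖(1 - (t:ℝ)) • x + (t:ℝ) • y‖⁻¹ • ((1 - (t:ℝ)) • x + (t:ℝ) • y) :=
    (hwc.norm.inv₀ hnz).smul hwc
  refine ⟨⟨⟨fun t => ‖(1 - (t:ℝ)) • x + (t:ℝ) • y‖⁻¹ • ((1 - (t:ℝ)) • x + (t:ℝ) • y), hcont⟩,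
    ?_, ?_⟩, fun t => hmem t t.2⟩
  · show ‖(1 - ((0:unitInterval):ℝ)) • x + ((0:unitInterval):ℝ) • y‖⁻¹ •
      ((1 - ((0:unitInterval):ℝ)) • x + ((0:unitInterval):ℝ) • y) = x
    norm_num [hx]
  · show ‖(1 - ((1:unitInterval):ℝ)) • x + ((1:unitInterval):ℝ) • y‖⁻¹ •
      ((1 - ((1:unitInterval):ℝ)) • x + ((1:unitInterval):ℝ) • y) = y
    norm_num [hy]

lemma arc_norm_one {F : Type*} [NormedAddCommGroup F] [NormedSpace ℝ F] {x y : F}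
    (hx : ‖x‖ = 1) (hy : ‖y‖ = 1) (hxy : x ≠ -y) {t : ℝ} (ht : t ∈ Icc (0:ℝ) 1) :
    ‖(‖(1-t) • x + t • y‖⁻¹ • ((1-t) • x + t • y))‖ = 1 := by
  rw [norm_smul, Real.norm_eq_abs, abs_inv, abs_norm]
  exact inv_mul_cancel₀ (norm_ne_zero_iff.2 (seg_ne_zero hx hy hxy ht))

lemma arc_dist_le {F : Type*} [NormedAddCommGroup F] [NormedSpace ℝ F] {x y : F}
    (hx : ‖x‖ = 1) (hy : ‖y‖ = 1) (hxy : x ≠ -y) {t : ℝ} (ht : t ∈ Icc (0:ℝ) 1) :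
    ‖(‖(1-t) • x + t • y‖⁻¹ • ((1-t) • x + t • y)) - x‖ ≤ 2 * ‖y - x‖ := by
  set w : F := (1-t) • x + t • y with hw
  have hw0 : w ≠ 0 := seg_ne_zero hx hy hxy ht
  have hwn : 0 < ‖w‖ := norm_pos_iff.2 hw0
  have hwx : w - x = t • (y - x) := by rw [hw]; module
  have h1 : ‖w - x‖ ≤ ‖y - x‖ := by
    rw [hwx, norm_smul, Real.norm_eq_abs, _root_.abs_of_nonneg ht.1]
    nlinarith [norm_nonneg (y - x), ht.2]
  have h2 : |‖w‖ - 1| ≤ ‖y - x‖ := by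
    have h3 := abs_norm_sub_norm_le w x
    rw [hx] at h3
    exact le_trans h3 h1
  have h4 : ‖‖w‖⁻¹ • w - w‖ = |1 - ‖w‖| := by
    have h5 : ‖w‖⁻¹ • w - w = (‖w‖⁻¹ - 1) • w := by module
    rw [h5, norm_smul, Real.norm_eq_abs]
    rw [← _root_.abs_of_nonneg (norm_nonneg w), ← abs_mul]
    congr 1
    field_simp
    rw [abs_norm]; ring
  calc ‖‖w‖⁻¹ • w - x‖ = ‖(‖w‖⁻¹ • w - w) + (w - x)‖ := by rw [sub_add_sub_cancel]
    _ ≤ ‖‖w‖⁻¹ • w - w‖ + ‖w - x‖ := norm_add_le _ _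
    _ = |1 - ‖w‖| + ‖w - x‖ := by rw [h4]
    _ ≤ ‖y - x‖ + ‖y - x‖ := by rw [abs_sub_comm] at h2; exact add_le_add h2 h1
    _ = 2 * ‖y - x‖ := by ring

end SphereGeometry

section Sphere

variable {n : ℕ}

local notation "E" => EuclideanSpace ℝ (Fin (n+1))
local notation "Sp" => Metric.sphere (0 : EuclideanSpace ℝ (Fin (n+1))) 1

lemma mem_Sp_iff {x : E} : x ∈ Sp ↔ ‖x‖ = 1 := mem_sphere_zero_iff_norm

lemma exists_unit_ne (hn : 2 ≤ n) (x : E) :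
    ∃ z : E, ‖z‖ = 1 ∧ z (Fin.last n) = 0 ∧ z ≠ x ∧ z ≠ -x := by
  have hi0 : (0:ℕ) < n + 1 := by omega
  have hi1 : (1:ℕ) < n + 1 := by omega
  set i0 : Fin (n+1) := ⟨0, hi0⟩ with hii0
  set i1 : Fin (n+1) := ⟨1, hi1⟩ with hii1
  set e0 : E := EuclideanSpace.single i0 (1:ℝ) with he0
  set e1 : E := EuclideanSpace.single i1 (1:ℝ) with he1
  have hn0 : ‖e0‖ = 1 := by rw [he0, EuclideanSpace.norm_single]; norm_num
  have hn1 : ‖e1‖ = 1 := by rw [he1, EuclideanSpace.norm_single]; norm_num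
  have hlast0 : e0 (Fin.last n) = 0 := by
    rw [he0, EuclideanSpace.single_apply, if_neg]
    simp only [Fin.ext_iff, Fin.val_last, hii0, hii1]
    omega
  have hlast1 : e1 (Fin.last n) = 0 := by
    rw [he1, EuclideanSpace.single_apply, if_neg]
    simp only [Fin.ext_iff, Fin.val_last, hii0, hii1]
    omega
  have he01 : e0 i1 = 0 := by
    rw [he0, EuclideanSpace.single_apply, if_neg]
    simp only [Fin.ext_iff, hii0, hii1]
    omega
  have he11 : e1 i1 = 1 := by rw [he1, EuclideanSpace.single_apply, if_pos rfl]
  by_cases hcase : e0 ≠ x ∧ e0 ≠ -x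
  · exact ⟨e0, hn0, hlast0, hcase.1, hcase.2⟩
  · push_neg at hcase
    refine ⟨e1, hn1, hlast1, ?_, ?_⟩
    · intro h
      by_cases h0 : e0 = x
      · have h2 : e0 = e1 := h0.trans h.symm
        have := congrArg (fun v : E => v i1) h2
        simp only [he01, he11] at this
        norm_num at this
      · have h0' : e0 = -x := hcase h0
        rw [← h] at h0'
        have := congrArg (fun v : E => v i1) h0'
        simp only [he01, PiLp.neg_apply, he11] at this
        norm_num at this
    · intro h
      by_cases h0 : e0 = x
      · have h2 : e1 = -e0 := by rw [h, ← h0]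
        have := congrArg (fun v : E => v i1) h2
        simp only [he01, PiLp.neg_apply, he11] at this
        norm_num at this
      · have h0' : e0 = -x := hcase h0
        have h2 : e0 = e1 := h0'.trans h.symm
        have := congrArg (fun v : E => v i1) h2
        simp only [he01, he11] at this
        norm_num at this

lemma sphere_joined_basic {x y : E} (hx : x ∈ Sp) (hy : y ∈ Sp) (hxy : x ≠ -y) :
    JoinedIn (Sp : Set E) x y := by
  have hxn : ‖x‖ = 1 := mem_Sp_iff.1 hx
  have hyn : ‖y‖ = 1 := mem_Sp_iff.1 hy
  exact joinedIn_arc hxn hyn hxy fun t ht =>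
    mem_Sp_iff.2 (arc_norm_one hxn hyn hxy ht)

lemma sphere_joinedIn (hn : 2 ≤ n) {x y : E} (hx : x ∈ Sp) (hy : y ∈ Sp) :
    JoinedIn (Sp : Set E) x y := by
  by_cases hxy : x = -y
  · obtain ⟨z, hz1, _, hzx, hzxn⟩ := exists_unit_ne hn x
    have hz : z ∈ Sp := mem_Sp_iff.2 hz1
    have j1 : JoinedIn (Sp : Set E) x z :=
      sphere_joined_basic hx hz (fun h => hzxn (by rw [h, neg_neg]))
    have j2 : JoinedIn (Sp : Set E) z y :=
      sphere_joined_basic hz hy (fun h => hzx (by rw [h, ← hxy]))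
    exact j1.trans j2
  · exact sphere_joined_basic hx hy hxy

lemma sphere_preconnected (hn : 2 ≤ n) : IsPreconnected (Sp : Set E) := by
  have hne : (EuclideanSpace.single (⟨0, by omega⟩ : Fin (n+1)) (1:ℝ)) ∈ Sp := by
    rw [mem_Sp_iff, EuclideanSpace.norm_single]; norm_num
  have : IsPathConnected (Sp : Set E) :=
    ⟨_, hne, fun _ hy => sphere_joinedIn hn hne hy⟩
  exact this.isConnected.isPreconnected

lemma equator_joined_basic {x y : E}
    (hx : ‖x‖ = 1 ∧ x (Fin.last n) = 0) (hy : ‖y‖ = 1 ∧ y (Fin.last n) = 0) (hxy : x ≠ -y) :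
    JoinedIn {z : E | ‖z‖ = 1 ∧ z (Fin.last n) = 0} x y := by
  refine joinedIn_arc hx.1 hy.1 hxy fun t ht => ⟨arc_norm_one hx.1 hy.1 hxy ht, ?_⟩
  simp only [PiLp.smul_apply, PiLp.add_apply, smul_eq_mul]
  rw [hx.2, hy.2]
  ring

lemma equator_preconnected (hn : 2 ≤ n) :
    IsPreconnected {z : E | ‖z‖ = 1 ∧ z (Fin.last n) = 0} := by
  have joined : ∀ x ∈ {z : E | ‖z‖ = 1 ∧ z (Fin.last n) = 0},
      ∀ y ∈ {z : E | ‖z‖ = 1 ∧ z (Fin.last n) = 0},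
      JoinedIn {z : E | ‖z‖ = 1 ∧ z (Fin.last n) = 0} x y := by
    intro x hx y hy
    by_cases hxy : x = -y
    · obtain ⟨z, hz1, hz2, hzx, hzxn⟩ := exists_unit_ne hn x
      have j1 : JoinedIn {z : E | ‖z‖ = 1 ∧ z (Fin.last n) = 0} x z :=
        equator_joined_basic hx ⟨hz1, hz2⟩ (fun h => hzxn (by rw [h, neg_neg]))
      have j2 : JoinedIn {z : E | ‖z‖ = 1 ∧ z (Fin.last n) = 0} z y :=
        equator_joined_basic ⟨hz1, hz2⟩ hy (fun h => hzx (by rw [h, ← hxy]))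
      exact j1.trans j2
    · exact equator_joined_basic hx hy hxy
  have hmem : (EuclideanSpace.single (⟨0, by omega⟩ : Fin (n+1)) (1:ℝ))
      ∈ {z : E | ‖z‖ = 1 ∧ z (Fin.last n) = 0} := by
    constructor
    · rw [EuclideanSpace.norm_single]; norm_num
    · rw [EuclideanSpace.single_apply, if_neg]
      simp only [Fin.ext_iff, Fin.val_last]
      omega
  have : IsPathConnected {z : E | ‖z‖ = 1 ∧ z (Fin.last n) = 0} :=
    ⟨_, hmem, fun _ hy => joined _ hmem _ hy⟩
  exact this.isConnected.isPreconnected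

lemma joined_compl_point {p x y : E} (hp : p ∈ Sp) (hx : x ∈ Sp) (hy : y ∈ Sp)
    (hxp : x ≠ p) (hyp : y ≠ p) : JoinedIn (Sp \ {p} : Set E) x y := by
  have hpn : ‖p‖ = 1 := mem_Sp_iff.1 hp
  have hpp : -p ≠ p := by
    intro h
    have h2 : (2:ℝ) • p = 0 := by
      have := congrArg (fun v => p + v) h
      simpa [two_smul] using this.symm
    have : p = 0 := by
      have := congrArg (fun v => (2:ℝ)⁻¹ • v) h2
      simpa [smul_smul] using this
    rw [this] at hpn
    norm_num at hpn
  have harc : ∀ z : E, z ∈ Sp → z ≠ p → JoinedIn (Sp \ {p} : Set E) z (-p) := by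
    intro z hz hzp
    have hzn : ‖z‖ = 1 := mem_Sp_iff.1 hz
    have hnpn : ‖(-p : E)‖ = 1 := by rwa [norm_neg]
    have hzz : z ≠ -(-p) := by rwa [neg_neg]
    refine joinedIn_arc hzn hnpn hzz fun t ht => ⟨mem_Sp_iff.2 (arc_norm_one hzn hnpn hzz ht), ?_⟩
    simp only [mem_singleton_iff]
    set w : E := (1 - t) • z + t • (-p) with hw
    intro hcp
    have hw0 : w ≠ 0 := seg_ne_zero hzn hnpn hzz ht
    have hwn : 0 < ‖w‖ := norm_pos_iff.2 hw0
    by_cases ht1 : t = 1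
    · rw [hw, ht1] at hcp
      simp only [sub_self, zero_smul, one_smul, zero_add] at hcp
      rw [norm_neg, hpn, inv_one, one_smul] at hcp
      exact hpp hcp
    · have htlt : t < 1 := lt_of_le_of_ne ht.2 ht1
      set c : ℝ := ‖w‖ with hc
      have hweq : w = c • p := by
        have := congrArg (fun v => c • v) hcp
        simpa [smul_smul, mul_inv_cancel₀ (ne_of_gt hwn)] using this
      have h5 : (1 - t) • z = (c + t) • p := by
        have h6 : (1 - t) • z = w - t • (-p) := by rw [hw]; module
        rw [h6, hweq]
        module
      have h7 : ‖(1 - t) • z‖ = ‖(c + t) • p‖ := by rw [h5]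
      rw [norm_smul, norm_smul, hzn, hpn, mul_one, mul_one, Real.norm_eq_abs,
        Real.norm_eq_abs, _root_.abs_of_nonneg (by linarith : (0:ℝ) ≤ 1 - t),
        _root_.abs_of_nonneg (by linarith [ht.1] : (0:ℝ) ≤ c + t)] at h7
      rw [h7] at h5
      have h8 : z = p :=
        smul_right_injective (EuclideanSpace ℝ (Fin (n+1)))
          (ne_of_gt (by linarith [ht.1] : (0:ℝ) < c + t)) h5
      exact hzp h8
  have j1 := harc x hx hxp
  have j2 := harc y hy hyp
  exact j1.trans j2.symm

/-- `C` separates `a` from `b` in the sphere. -/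
def Sep {n : ℕ} (C : Set (EuclideanSpace ℝ (Fin (n+1))))
    (a b : EuclideanSpace ℝ (Fin (n+1))) : Prop :=
  ∃ u v : Set (EuclideanSpace ℝ (Fin (n+1))), IsOpen u ∧ IsOpen v ∧
    (Metric.sphere 0 1 \ C ⊆ u ∪ v) ∧ a ∈ u ∧ b ∈ v ∧
    (Metric.sphere 0 1 \ C) ∩ (u ∩ v) = ∅

lemma not_sep_empty (hn : 2 ≤ n) {a b : E} (ha : a ∈ Sp) (hb : b ∈ Sp) :
    ¬ Sep (∅ : Set E) a b := by
  rintro ⟨u, v, hu, hv, hcov, hau, hbv, hdisj⟩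
  rw [diff_empty] at hcov hdisj
  obtain ⟨z, hz⟩ := sphere_preconnected hn u v hu hv hcov ⟨a, ha, hau⟩ ⟨b, hb, hbv⟩
  rw [hdisj] at hz
  exact hz

lemma joined_of_not_sep (hn : 2 ≤ n) {C : Set E} (hC : IsCompact C) {a b : E}
    (haS : a ∈ Sp) (hbS : b ∈ Sp) (haC : a ∉ C) (hbC : b ∉ C)
    (hns : ¬ Sep C a b) : JoinedIn (Sp \ C : Set E) a b := by
  rcases C.eq_empty_or_nonempty with rfl | hCne
  · exact (sphere_joinedIn hn haS hbS).mono (by rw [diff_empty])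
  have hCc : IsClosed C := hC.isClosed
  have hdpos : ∀ x, x ∈ Sp \ C → 0 < infDist x C := by
    intro x hx
    have h0 : infDist x C ≠ 0 := by
      intro h
      exact hx.2 (by rw [← hCc.closure_eq]; exact (mem_closure_iff_infDist_zero hCne).2 h)
    exact lt_of_le_of_ne infDist_nonneg (Ne.symm h0)
  set r : E → ℝ := fun x => min 4⁻¹ (infDist x C / 4) with hr
  have hrpos : ∀ x ∈ Sp \ C, 0 < r x :=
    fun x hx => lt_min (by norm_num) (by linarith [hdpos x hx])
  have hrle : ∀ x : E, r x ≤ 4⁻¹ := fun x => min_le_left _ _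
  have hrle2 : ∀ x : E, r x ≤ infDist x C / 4 := fun x => min_le_right _ _
  have loc : ∀ x ∈ (Sp \ C : Set E), ∀ y ∈ Sp, dist y x < r x →
      JoinedIn (Sp \ C : Set E) x y := by
    intro x hx y hy hlt
    have hxn : ‖x‖ = 1 := mem_Sp_iff.1 hx.1
    have hyn : ‖y‖ = 1 := mem_Sp_iff.1 hy
    have hyx : ‖y - x‖ < r x := by rwa [dist_eq_norm] at hlt
    have hxy : x ≠ -y := by
      intro h
      have h2 : y - x = (2:ℝ) • y := by rw [h]; module
      have h3 : ‖y - x‖ = 2 := by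
        rw [h2, norm_smul, hyn, mul_one, Real.norm_eq_abs]
        norm_num
      have := hrle x
      linarith
    refine joinedIn_arc hxn hyn hxy fun t ht => ⟨mem_Sp_iff.2 (arc_norm_one hxn hyn hxy ht), ?_⟩
    intro hzC
    have hd := arc_dist_le hxn hyn hxy ht
    have h1 : infDist x C ≤ dist x (‖(1-t) • x + t • y‖⁻¹ • ((1-t) • x + t • y)) :=
      infDist_le_dist_of_mem hzC
    rw [dist_eq_norm, norm_sub_rev] at h1
    have := hrle2 x
    linarith [hdpos x hx]
  set A : Set E := {x | x ∈ (Sp \ C : Set E) ∧ JoinedIn (Sp \ C : Set E) a x} with hA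
  by_cases hbA : b ∈ A
  · exact hbA.2
  · exfalso
    apply hns
    refine ⟨⋃ x ∈ A, ball x (r x), ⋃ x ∈ ((Sp \ C : Set E) \ A), ball x (r x),
      isOpen_biUnion fun _ _ => isOpen_ball, isOpen_biUnion fun _ _ => isOpen_ball,
      ?_, ?_, ?_, ?_⟩
    · intro z hz
      by_cases hzA : z ∈ A
      · exact Or.inl (mem_biUnion hzA (mem_ball_self (hrpos z hz)))
      · exact Or.inr (mem_biUnion ⟨hz, hzA⟩ (mem_ball_self (hrpos z hz)))
    · have haA : a ∈ A := ⟨⟨haS, haC⟩, JoinedIn.refl ⟨haS, haC⟩⟩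
      exact mem_biUnion haA (mem_ball_self (hrpos a ⟨haS, haC⟩))
    · exact mem_biUnion ⟨⟨hbS, hbC⟩, hbA⟩ (mem_ball_self (hrpos b ⟨hbS, hbC⟩))
    · apply eq_empty_iff_forall_notMem.2
      rintro z ⟨hzSC, hzu, hzv⟩
      rcases mem_iUnion₂.1 hzu with ⟨x, hxA, hzx⟩
      rcases mem_iUnion₂.1 hzv with ⟨x', hx', hzx'⟩
      have hjz : JoinedIn (Sp \ C : Set E) x z :=
        loc x hxA.1 z hzSC.1 (by rwa [mem_ball] at hzx)
      have hjz' : JoinedIn (Sp \ C : Set E) x' z :=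
        loc x' hx'.1 z hzSC.1 (by rwa [mem_ball] at hzx')
      exact hx'.2 ⟨hx'.1, (hxA.2.trans hjz).trans hjz'.symm⟩

lemma hemisphere_lift {f : E → ℂ} (hf : ContinuousOn f (Sp : Set E))
    (hunit : ∀ x ∈ (Sp : Set E), ‖f x‖ = 1) {ε : ℝ} (hε : ε = 1 ∨ ε = -1) :
    ∃ G : E → ℝ, ContinuousOn G (Sp ∩ {x : E | 0 ≤ ε * x (Fin.last n)}) ∧
      ∀ x ∈ Sp ∩ {x : E | 0 ≤ ε * x (Fin.last n)}, f x = Complex.exp (G x * I) := by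
  have hcoord : Continuous fun x : E => x (Fin.last n) :=
    (EuclideanSpace.proj (Fin.last n)).continuous
  have hclosed : IsClosed {x : E | 0 ≤ ε * x (Fin.last n)} := by
    have : {x : E | 0 ≤ ε * x (Fin.last n)} = (fun x : E => ε * x (Fin.last n)) ⁻¹' (Ici 0) :=
      rfl
    rw [this]
    exact isClosed_Ici.preimage (continuous_const.mul hcoord)
  set H : Set E := Sp ∩ {x : E | 0 ≤ ε * x (Fin.last n)} with hH
  have hHc : IsCompact H := (isCompact_sphere 0 1).inter_right hclosed
  set pole : E := EuclideanSpace.single (Fin.last n) ε with hpole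
  have hεsq : ε * ε = 1 := by rcases hε with h | h <;> rw [h] <;> norm_num
  have hpole_norm : ‖pole‖ = 1 := by
    rw [hpole, EuclideanSpace.norm_single, Real.norm_eq_abs]
    rcases hε with h | h <;> rw [h] <;> norm_num
  have hpole_last : pole (Fin.last n) = ε := by
    rw [hpole, EuclideanSpace.single_apply, if_pos rfl]
  have hinner_pole : ∀ x : E, (inner ℝ pole x : ℝ) = ε * x (Fin.last n) := by
    intro x
    rw [hpole, EuclideanSpace.inner_single_left]
    simp [starRingEnd_apply]
  set W : ℝ × E → E := fun p => (1 - p.1) • pole + p.1 • p.2 with hW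
  have hWc : Continuous W := by fun_prop
  have hWlow : ∀ t ∈ Icc (0:ℝ) 1, ∀ x ∈ H, 1/2 ≤ ‖W (t, x)‖ := by
    intro t ht x hx
    have hxn : ‖x‖ = 1 := mem_Sp_iff.1 hx.1
    have hs : 0 ≤ ε * x (Fin.last n) := hx.2
    have hip : (inner ℝ (pole + x) (W (t, x)) : ℝ) = 1 + ε * x (Fin.last n) := by
      rw [hW]
      simp only
      rw [inner_add_left, inner_add_right, inner_add_right, real_inner_smul_right,
        real_inner_smul_right, real_inner_smul_right, real_inner_smul_right,
        real_inner_comm pole x, hinner_pole x, real_inner_self_eq_norm_sq,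
        real_inner_self_eq_norm_sq, hpole_norm, hxn]
      ring
    have hcs : (inner ℝ (pole + x) (W (t, x)) : ℝ) ≤ ‖pole + x‖ * ‖W (t, x)‖ := real_inner_le_norm _ _
    have hna : ‖pole + x‖ ≤ 2 := by
      calc ‖pole + x‖ ≤ ‖pole‖ + ‖x‖ := norm_add_le _ _
        _ = 2 := by rw [hpole_norm, hxn]; norm_num
    nlinarith [norm_nonneg (W (t, x)), norm_nonneg (pole + x)]
  have hWne : ∀ t ∈ Icc (0:ℝ) 1, ∀ x ∈ H, ‖W (t, x)‖ ≠ 0 := by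
    intro t ht x hx
    have := hWlow t ht x hx
    intro h
    rw [h] at this
    norm_num at this
  set q : ℝ × E → E := fun p => ‖W p‖⁻¹ • W p with hq
  have hqcont : ContinuousOn q (Icc (0:ℝ) 1 ×ˢ H) := by
    refine ContinuousOn.smul (f := fun p => ‖W p‖⁻¹) (g := W) ?_ ?_
    · exact (hWc.norm.continuousOn).inv₀ fun p hp => hWne p.1 hp.1 p.2 hp.2
    · exact hWc.continuousOn
  have hWlast : ∀ t ∈ Icc (0:ℝ) 1, ∀ x ∈ H, 0 ≤ ε * (W (t, x)) (Fin.last n) := by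
    intro t ht x hx
    have h1 : (W (t, x)) (Fin.last n) = (1 - t) * ε + t * x (Fin.last n) := by
      rw [hW]
      simp only [PiLp.add_apply, PiLp.smul_apply, smul_eq_mul, hpole_last]
    rw [h1]
    have h2 : ε * ((1 - t) * ε + t * x (Fin.last n))
        = (1 - t) + t * (ε * x (Fin.last n)) := by
      linear_combination (1 - t) * hεsq
    rw [h2]
    have hs : (0:ℝ) ≤ ε * x (Fin.last n) := hx.2
    have h4 := mul_nonneg ht.1 hs
    linarith [ht.2]
  have hqmem : ∀ p ∈ Icc (0:ℝ) 1 ×ˢ H, q p ∈ H := by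
    rintro ⟨t, x⟩ ⟨ht, hx⟩
    have hWn := hWne t ht x hx
    constructor
    · rw [mem_Sp_iff, hq]
      simp only
      rw [norm_smul, Real.norm_eq_abs, abs_inv, abs_norm]
      exact inv_mul_cancel₀ hWn
    · show 0 ≤ ε * (q (t, x)) (Fin.last n)
      rw [hq]
      simp only [PiLp.smul_apply, smul_eq_mul]
      have h3 : ε * (‖W (t, x)‖⁻¹ * (W (t, x)) (Fin.last n))
          = ‖W (t, x)‖⁻¹ * (ε * (W (t, x)) (Fin.last n)) := by ring
      rw [h3]
      exact mul_nonneg (by positivity) (hWlast t ht x hx)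
  have hq0 : ∀ x ∈ H, q (0, x) = pole := by
    intro x hx
    rw [hq, hW]
    simp [hpole_norm]
  have hq1 : ∀ x ∈ H, q (1, x) = x := by
    intro x hx
    rw [hq, hW]
    simp [mem_Sp_iff.1 hx.1]
  exact exists_lift_of_contraction hHc (hf.mono inter_subset_left)
    (fun x hx => hunit x hx.1) hqcont hqmem hq0 hq1

lemma sphere_lift (hn : 2 ≤ n) {f : E → ℂ} (hf : ContinuousOn f (Sp : Set E))
    (hunit : ∀ x ∈ (Sp : Set E), ‖f x‖ = 1) :
    ∃ G : E → ℝ, ContinuousOn G (Sp : Set E) ∧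
      ∀ x ∈ (Sp : Set E), f x = Complex.exp (G x * I) := by
  obtain ⟨Gp, hGpc, hGp⟩ := hemisphere_lift hf hunit (Or.inl rfl : (1:ℝ) = 1 ∨ (1:ℝ) = -1)
  obtain ⟨Gm, hGmc, hGm⟩ := hemisphere_lift hf hunit (Or.inr rfl : (-1:ℝ) = 1 ∨ (-1:ℝ) = -1)
  set Hp : Set E := Sp ∩ {x : E | 0 ≤ (1:ℝ) * x (Fin.last n)} with hHp
  set Hm : Set E := Sp ∩ {x : E | 0 ≤ (-1:ℝ) * x (Fin.last n)} with hHm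
  set EqS : Set E := {z : E | ‖z‖ = 1 ∧ z (Fin.last n) = 0} with hEqS
  have hEqp : EqS ⊆ Hp := by
    rintro x ⟨hx1, hx2⟩
    exact ⟨mem_Sp_iff.2 hx1, by simp [hx2]⟩
  have hEqm : EqS ⊆ Hm := by
    rintro x ⟨hx1, hx2⟩
    exact ⟨mem_Sp_iff.2 hx1, by simp [hx2]⟩
  have hint : ∀ x ∈ EqS, ∃ k : ℤ, Gp x - Gm x = 2 * Real.pi * k := by
    intro x hx
    have h1 : Complex.exp (Gp x * I) = Complex.exp (Gm x * I) :=
      (hGp x (hEqp hx)).symm.trans (hGm x (hEqm hx))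
    obtain ⟨k, hk⟩ := Complex.exp_eq_exp_iff_exists_int.1 h1
    refine ⟨k, ?_⟩
    have h2 : ((Gp x - Gm x - 2 * Real.pi * k : ℝ) : ℂ) * I = 0 := by
      push_cast
      linear_combination hk
    have h3 : ((Gp x - Gm x - 2 * Real.pi * k : ℝ) : ℂ) = 0 := by
      rcases mul_eq_zero.1 h2 with h | h
      · exact h
      · exact absurd h Complex.I_ne_zero
    have h4 : (Gp x - Gm x - 2 * Real.pi * k : ℝ) = 0 := by exact_mod_cast h3
    linarith
  have hDcont : ContinuousOn (fun x => Gp x - Gm x) EqS :=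
    (hGpc.mono hEqp).sub (hGmc.mono hEqm)
  have hconst := const_of_int_values (equator_preconnected hn) hDcont hint
  set e₀ : E := EuclideanSpace.single (⟨0, by omega⟩ : Fin (n+1)) (1:ℝ) with he₀
  have he₀mem : e₀ ∈ EqS := by
    constructor
    · rw [he₀, EuclideanSpace.norm_single]; norm_num
    · rw [he₀, EuclideanSpace.single_apply, if_neg]
      simp only [Fin.ext_iff, Fin.val_last]
      omega
  set c : ℝ := Gp e₀ - Gm e₀ with hc
  have hexpc : Complex.exp ((c : ℂ) * I) = 1 := by
    obtain ⟨k0, hk0⟩ := hint e₀ he₀mem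
    rw [hc]
    have : ((Gp e₀ - Gm e₀ : ℝ) : ℂ) * I = (k0 : ℂ) * (2 * Real.pi * I) := by
      rw [hk0]
      push_cast
      ring
    rw [this]
    exact Complex.exp_int_mul_two_pi_mul_I k0
  set G : E → ℝ := fun x => if 0 ≤ x (Fin.last n) then Gp x else Gm x + c with hG
  have hGpc' : ContinuousOn Gp (Sp ∩ {x : E | 0 ≤ x (Fin.last n)}) := by
    apply hGpc.mono
    rintro x ⟨hx1, hx2⟩
    exact ⟨hx1, by simpa using hx2⟩
  have hGmc' : ContinuousOn (fun x => Gm x + c) (Sp ∩ {x : E | x (Fin.last n) ≤ 0}) := by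
    apply ContinuousOn.add _ continuousOn_const
    apply hGmc.mono
    rintro x ⟨hx1, hx2⟩
    refine ⟨hx1, ?_⟩
    show (0:ℝ) ≤ -1 * x (Fin.last n)
    simp only [mem_setOf_eq] at hx2
    linarith
  have hcoord : Continuous fun x : E => x (Fin.last n) :=
    (EuclideanSpace.proj (Fin.last n)).continuous
  have hF1closed : IsClosed {x : E | 0 ≤ x (Fin.last n)} :=
    isClosed_Ici.preimage hcoord
  have hF2closed : IsClosed {x : E | x (Fin.last n) ≤ 0} :=
    isClosed_Iic.preimage hcoord
  have hagree : ∀ x ∈ (Sp ∩ {x : E | 0 ≤ x (Fin.last n)}) ∩ {x : E | x (Fin.last n) ≤ 0},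
      Gp x = Gm x + c := by
    rintro x ⟨⟨hx1, hx2⟩, hx3⟩
    have hx0 : x (Fin.last n) = 0 := le_antisymm hx3 hx2
    have hxEq : x ∈ EqS := ⟨mem_Sp_iff.1 hx1, hx0⟩
    have := hconst x hxEq e₀ he₀mem
    rw [hc]
    linarith
  refine ⟨G, ?_, ?_⟩
  · exact continuousOn_of_closed_pieces hF1closed hF2closed
      (fun x _ => le_total 0 (x (Fin.last n)))
      hGpc' hGmc' hagree (fun x hx => if_pos hx) (fun x hx => if_neg hx)
  · intro x hx
    by_cases hpos : 0 ≤ x (Fin.last n)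
    · have : G x = Gp x := if_pos hpos
      rw [this]
      exact hGp x ⟨hx, by simpa using hpos⟩
    · have hGx : G x = Gm x + c := if_neg hpos
      rw [hGx]
      have hxm : x ∈ Hm := by
        refine ⟨hx, ?_⟩
        show (0:ℝ) ≤ -1 * x (Fin.last n)
        push_neg at hpos
        linarith
      rw [hGm x hxm]
      have : ((Gm x + c : ℝ) : ℂ) * I = (Gm x : ℂ) * I + (c : ℂ) * I := by
        push_cast
        ring
      rw [this, Complex.exp_add, hexpc, mul_one]

lemma pbp (hn : 2 ≤ n) {C D : Set E} (hC : IsCompact C) (hD : IsCompact D)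
    (hdisj : Disjoint C D) {a b : E}
    (haS : a ∈ Sp) (hbS : b ∈ Sp) (haCD : a ∉ C ∪ D) (hbCD : b ∉ C ∪ D)
    (hsep : Sep (C ∪ D) a b) : Sep C a b ∨ Sep D a b := by
  rcases C.eq_empty_or_nonempty with rfl | hCne
  · right; rwa [empty_union] at hsep
  rcases D.eq_empty_or_nonempty with rfl | hDne
  · left; rwa [union_empty] at hsep
  by_contra hcon
  push_neg at hcon
  obtain ⟨hnsC, hnsD⟩ := hcon
  set u : E → ℝ := fun z => infDist z C / (infDist z C + infDist z D) with hu
  have hdenpos : ∀ z : E, 0 < infDist z C + infDist z D := by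
    intro z
    rcases lt_or_eq_of_le (add_nonneg infDist_nonneg infDist_nonneg : (0:ℝ) ≤ infDist z C + infDist z D) with h | h
    · exact h
    · exfalso
      have hn1 : (0:ℝ) ≤ infDist z C := infDist_nonneg
      have hn2 : (0:ℝ) ≤ infDist z D := infDist_nonneg
      have h1 : infDist z C = 0 := by linarith
      have h2 : infDist z D = 0 := by linarith
      have hzC : z ∈ C := by
        rw [← hC.isClosed.closure_eq]; exact (mem_closure_iff_infDist_zero hCne).2 h1
      have hzD : z ∈ D := by
        rw [← hD.isClosed.closure_eq]; exact (mem_closure_iff_infDist_zero hDne).2 h2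
      exact (disjoint_left.1 hdisj) hzC hzD
  have hucont : Continuous u :=
    (continuous_infDist_pt C).div ((continuous_infDist_pt C).add (continuous_infDist_pt D))
      (fun z => ne_of_gt (hdenpos z))
  have huC : ∀ z, z ∈ C ↔ u z = 0 := by
    intro z
    constructor
    · intro hz
      rw [hu]; simp only
      rw [infDist_zero_of_mem hz, zero_div]
    · intro hz
      rcases div_eq_zero_iff.1 hz with h | h
      · rw [← hC.isClosed.closure_eq]
        exact (mem_closure_iff_infDist_zero hCne).2 h
      · exact absurd h (ne_of_gt (hdenpos z))
  have huD : ∀ z, z ∈ D ↔ u z = 1 := by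
    intro z
    constructor
    · intro hz
      have hzC : z ∉ C := fun h => (disjoint_left.1 hdisj) h hz
      have hdC : infDist z C ≠ 0 := by
        intro h
        apply hzC
        rw [← hC.isClosed.closure_eq]
        exact (mem_closure_iff_infDist_zero hCne).2 h
      rw [hu]; simp only
      rw [infDist_zero_of_mem hz, add_zero, div_self hdC]
    · intro hz
      have h1 : infDist z C = infDist z C + infDist z D :=
        (div_eq_one_iff_eq (ne_of_gt (hdenpos z))).1 hz
      have h2 : infDist z D = 0 := by linarith
      rw [← hD.isClosed.closure_eq]
      exact (mem_closure_iff_infDist_zero hDne).2 h2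
  obtain ⟨w, w', hwo, hw'o, hcov, haw, hbw', hdis⟩ := hsep
  have hCDc : IsClosed (C ∪ D) := (hC.union hD).isClosed
  set O : Set E := w ∩ (C ∪ D)ᶜ with hO
  have hOopen : IsOpen O := hwo.inter hCDc.isOpen_compl
  set A₀ : Set E := Sp ∩ O with hA₀
  have haA₀ : a ∈ A₀ := ⟨haS, haw, haCD⟩
  have hbN : b ∉ closure A₀ := by
    intro hb
    have hNopen : IsOpen (w' ∩ (C ∪ D)ᶜ) := hw'o.inter hCDc.isOpen_compl
    rcases mem_closure_iff.1 hb _ hNopen ⟨hbw', hbCD⟩ with ⟨z, hz1, hz2⟩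
    have hzmem : z ∈ (Sp \ (C ∪ D) : Set E) ∩ (w ∩ w') := ⟨⟨hz2.1, hz1.2⟩, hz2.2.1, hz1.1⟩
    rw [hdis] at hzmem
    exact hzmem
  have hbdry : ∀ z ∈ Sp, z ∈ closure A₀ → z ∉ O → z ∈ C ∪ D := by
    intro z hzS hzcl hzO
    by_contra hzCD
    rcases hcov ⟨hzS, hzCD⟩ with h | h
    · exact hzO ⟨h, hzCD⟩
    · have hNopen : IsOpen (w' ∩ (C ∪ D)ᶜ) := hw'o.inter hCDc.isOpen_compl
      rcases mem_closure_iff.1 hzcl _ hNopen ⟨h, hzCD⟩ with ⟨z', hz1, hz2⟩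
      have hzmem : z' ∈ (Sp \ (C ∪ D) : Set E) ∩ (w ∩ w') := ⟨⟨hz2.1, hz1.2⟩, hz2.2.1, hz1.1⟩
      rw [hdis] at hzmem
      exact hzmem
  classical
  set g : E → ℂ := fun z =>
    if z ∈ closure A₀ then Complex.exp ((Real.pi * u z : ℝ) * I)
    else Complex.exp ((-(Real.pi * u z) : ℝ) * I) with hg
  have hc₁ : Continuous fun z : E => Complex.exp ((Real.pi * u z : ℝ) * I) := by
    apply Complex.continuous_exp.comp
    exact (Complex.continuous_ofReal.comp (continuous_const.mul hucont)).mul continuous_const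
  have hc₂ : Continuous fun z : E => Complex.exp ((-(Real.pi * u z) : ℝ) * I) := by
    apply Complex.continuous_exp.comp
    exact (Complex.continuous_ofReal.comp ((continuous_const.mul hucont).neg)).mul
      continuous_const
  have hgcont : ContinuousOn g (Sp : Set E) := by
    apply continuousOn_of_closed_pieces isClosed_closure hOopen.isClosed_compl
      (fun z hz => ?_) hc₁.continuousOn hc₂.continuousOn (fun z hz => ?_)
      (fun z hz => if_pos hz) (fun z hz => if_neg hz)
    · by_cases hzO : z ∈ O
      · exact Or.inl (subset_closure ⟨hz, hzO⟩)
      · exact Or.inr hzO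
    · have hzCD : z ∈ C ∪ D := hbdry z hz.1.1 hz.1.2 hz.2
      rcases hzCD with hzC | hzD
      · rw [(huC z).1 hzC]
        norm_num
      · rw [(huD z).1 hzD]
        rw [mul_one]
        have h1 : ((-Real.pi : ℝ) : ℂ) * I = -(((Real.pi : ℝ) : ℂ) * I) := by push_cast; ring
        rw [h1, Complex.exp_neg, Complex.exp_pi_mul_I]
        norm_num
  have hgunit : ∀ z ∈ (Sp : Set E), ‖g z‖ = 1 := by
    intro z _
    rw [hg]
    simp only
    split_ifs <;> rw [Complex.norm_exp_ofReal_mul_I]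
  obtain ⟨G, hGc, hGspec⟩ := sphere_lift hn hgcont hgunit
  obtain ⟨γC, hγC⟩ := joined_of_not_sep hn hC haS hbS
    (fun h => haCD (Or.inl h)) (fun h => hbCD (Or.inl h)) hnsC
  obtain ⟨γD, hγD⟩ := joined_of_not_sep hn hD haS hbS
    (fun h => haCD (Or.inr h)) (fun h => hbCD (Or.inr h)) hnsD
  set αe : ℝ → E := ⇑γC.extend with hαe
  set βe : ℝ → E := ⇑γD.extend with hβe
  have hαc : Continuous αe := γC.continuous_extend
  have hβc : Continuous βe := γD.continuous_extend
  have hαmem : ∀ t ∈ Icc (0:ℝ) 1, αe t ∈ (Sp \ C : Set E) := by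
    intro t ht
    rw [hαe, Path.extend_apply γC ht]
    exact hγC _
  have hβmem : ∀ t ∈ Icc (0:ℝ) 1, βe t ∈ (Sp \ D : Set E) := by
    intro t ht
    rw [hβe, Path.extend_apply γD ht]
    exact hγD _
  set ψα : ℝ → ℝ := fun t =>
    if αe t ∈ closure A₀ then Real.pi * u (αe t) else 2 * Real.pi - Real.pi * u (αe t) with hψα
  set ψβ : ℝ → ℝ := fun t =>
    if βe t ∈ closure A₀ then Real.pi * u (βe t) else -(Real.pi * u (βe t)) with hψβ
  have hψαc : ContinuousOn ψα (Icc (0:ℝ) 1) := by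
    apply continuousOn_of_closed_pieces (isClosed_closure.preimage hαc)
      ((hOopen.isClosed_compl).preimage hαc) (fun t ht => ?_)
      ((continuous_const.mul (hucont.comp hαc)).continuousOn)
      ((continuous_const.sub (continuous_const.mul (hucont.comp hαc))).continuousOn)
      (fun t ht => ?_) (fun t ht => if_pos ht) (fun t ht => if_neg ht)
    · by_cases hzO : αe t ∈ O
      · exact Or.inl (subset_closure ⟨(hαmem t ht).1, hzO⟩)
      · exact Or.inr hzO
    · have hzCD : αe t ∈ C ∪ D := hbdry _ (hαmem t ht.1.1).1 ht.1.2 ht.2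
      rcases hzCD with hzC | hzD
      · exact absurd hzC (hαmem t ht.1.1).2
      · simp only [Pi.mul_apply, Pi.sub_apply, Function.comp_apply]
        rw [(huD _).1 hzD]
        ring
  have hψβc : ContinuousOn ψβ (Icc (0:ℝ) 1) := by
    apply continuousOn_of_closed_pieces (isClosed_closure.preimage hβc)
      ((hOopen.isClosed_compl).preimage hβc) (fun t ht => ?_)
      ((continuous_const.mul (hucont.comp hβc)).continuousOn)
      (((continuous_const.mul (hucont.comp hβc)).neg).continuousOn)
      (fun t ht => ?_) (fun t ht => if_pos ht) (fun t ht => if_neg ht)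
    · by_cases hzO : βe t ∈ O
      · exact Or.inl (subset_closure ⟨(hβmem t ht).1, hzO⟩)
      · exact Or.inr hzO
    · have hzCD : βe t ∈ C ∪ D := hbdry _ (hβmem t ht.1.1).1 ht.1.2 ht.2
      rcases hzCD with hzC | hzD
      · simp only [Pi.mul_apply, Pi.neg_apply, Function.comp_apply]
        rw [(huC _).1 hzC]
        ring
      · exact absurd hzD (hβmem t ht.1.1).2
  have hψα_exp : ∀ t ∈ Icc (0:ℝ) 1, Complex.exp ((ψα t : ℝ) * I) = g (αe t) := by
    intro t ht
    rw [hψα, hg]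
    simp only
    by_cases hmem : αe t ∈ closure A₀
    · rw [if_pos hmem, if_pos hmem]
    · rw [if_neg hmem, if_neg hmem]
      have h1 : ((2 * Real.pi - Real.pi * u (αe t) : ℝ) : ℂ) * I
          = 2 * Real.pi * I + ((-(Real.pi * u (αe t)) : ℝ) : ℂ) * I := by push_cast; ring
      rw [h1, Complex.exp_add, Complex.exp_two_pi_mul_I, one_mul]
  have hψβ_exp : ∀ t ∈ Icc (0:ℝ) 1, Complex.exp ((ψβ t : ℝ) * I) = g (βe t) := by
    intro t ht
    rw [hψβ, hg]
    simp only
    by_cases hmem : βe t ∈ closure A₀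
    · rw [if_pos hmem, if_pos hmem]
    · rw [if_neg hmem, if_neg hmem]
  have hδα : ∀ t ∈ Icc (0:ℝ) 1, ∃ k : ℤ, G (αe t) - ψα t = 2 * Real.pi * k := by
    intro t ht
    have h1 : Complex.exp ((G (αe t) : ℝ) * I) = Complex.exp ((ψα t : ℝ) * I) := by
      rw [hψα_exp t ht, ← hGspec _ (hαmem t ht).1]
    obtain ⟨k, hk⟩ := Complex.exp_eq_exp_iff_exists_int.1 h1
    refine ⟨k, ?_⟩
    have h2 : ((G (αe t) - ψα t - 2 * Real.pi * k : ℝ) : ℂ) * I = 0 := by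
      push_cast
      linear_combination hk
    have h3 : ((G (αe t) - ψα t - 2 * Real.pi * k : ℝ) : ℂ) = 0 := by
      rcases mul_eq_zero.1 h2 with h | h
      · exact h
      · exact absurd h Complex.I_ne_zero
    have h4 : (G (αe t) - ψα t - 2 * Real.pi * k : ℝ) = 0 := by exact_mod_cast h3
    linarith
  have hδβ : ∀ t ∈ Icc (0:ℝ) 1, ∃ k : ℤ, G (βe t) - ψβ t = 2 * Real.pi * k := by
    intro t ht
    have h1 : Complex.exp ((G (βe t) : ℝ) * I) = Complex.exp ((ψβ t : ℝ) * I) := by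
      rw [hψβ_exp t ht, ← hGspec _ (hβmem t ht).1]
    obtain ⟨k, hk⟩ := Complex.exp_eq_exp_iff_exists_int.1 h1
    refine ⟨k, ?_⟩
    have h2 : ((G (βe t) - ψβ t - 2 * Real.pi * k : ℝ) : ℂ) * I = 0 := by
      push_cast
      linear_combination hk
    have h3 : ((G (βe t) - ψβ t - 2 * Real.pi * k : ℝ) : ℂ) = 0 := by
      rcases mul_eq_zero.1 h2 with h | h
      · exact h
      · exact absurd h Complex.I_ne_zero
    have h4 : (G (βe t) - ψβ t - 2 * Real.pi * k : ℝ) = 0 := by exact_mod_cast h3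
    linarith
  have hδαc : ContinuousOn (fun t => G (αe t) - ψα t) (Icc (0:ℝ) 1) :=
    (hGc.comp hαc.continuousOn (fun t ht => (hαmem t ht).1)).sub hψαc
  have hδβc : ContinuousOn (fun t => G (βe t) - ψβ t) (Icc (0:ℝ) 1) :=
    (hGc.comp hβc.continuousOn (fun t ht => (hβmem t ht).1)).sub hψβc
  have h0mem : (0:ℝ) ∈ Icc (0:ℝ) 1 := ⟨le_rfl, zero_le_one⟩
  have h1mem : (1:ℝ) ∈ Icc (0:ℝ) 1 := ⟨zero_le_one, le_rfl⟩
  have hconstα := const_of_int_values isPreconnected_Icc hδαc hδα 0 h0mem 1 h1mem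
  have hconstβ := const_of_int_values isPreconnected_Icc hδβc hδβ 0 h0mem 1 h1mem
  have hα0 : αe 0 = a := γC.extend_zero
  have hα1 : αe 1 = b := γC.extend_one
  have hβ0 : βe 0 = a := γD.extend_zero
  have hβ1 : βe 1 = b := γD.extend_one
  have hψα0 : ψα 0 = Real.pi * u a := by
    rw [hψα]; simp only
    rw [hα0, if_pos (subset_closure haA₀)]
  have hψα1 : ψα 1 = 2 * Real.pi - Real.pi * u b := by
    rw [hψα]; simp only
    rw [hα1, if_neg hbN]
  have hψβ0 : ψβ 0 = Real.pi * u a := by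
    rw [hψβ]; simp only
    rw [hβ0, if_pos (subset_closure haA₀)]
  have hψβ1 : ψβ 1 = -(Real.pi * u b) := by
    rw [hψβ]; simp only
    rw [hβ1, if_neg hbN]
  rw [hα0, hα1, hψα0, hψα1] at hconstα
  rw [hβ0, hβ1, hψβ0, hψβ1] at hconstβ
  linarith [Real.pi_pos]

lemma pbp_list (hn : 2 ≤ n) {a b : E} (haS : a ∈ Sp) (hbS : b ∈ Sp) :
    ∀ L : List (Set E), (∀ s ∈ L, IsCompact s) → L.Pairwise Disjoint →
      a ∉ unions L → b ∉ unions L → Sep (unions L) a b → ∃ s ∈ L, Sep s a b := by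
  intro L
  induction L with
  | nil =>
    intro _ _ _ _ hsep
    exact absurd hsep (not_sep_empty hn haS hbS)
  | cons s L ih =>
    intro hcomp hpair ha hb hsep
    have hsep' : Sep (s ∪ unions L) a b := hsep
    have hd : Disjoint s (unions L) :=
      disjoint_unions fun t ht => (List.pairwise_cons.1 hpair).1 t ht
    have ha' : a ∉ s ∪ unions L := ha
    have hb' : b ∉ s ∪ unions L := hb
    rcases pbp hn (hcomp s (List.mem_cons_self))
        (unions_compact fun t ht => hcomp t (List.mem_cons_of_mem _ ht)) hd haS hbS
        ha' hb' hsep' with h | h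
    · exact ⟨s, List.mem_cons_self, h⟩
    · obtain ⟨t, ht, hsept⟩ := ih (fun t ht => hcomp t (List.mem_cons_of_mem _ ht))
        (List.pairwise_cons.1 hpair).2 (fun hm => ha (Or.inr hm)) (fun hm => hb (Or.inr hm)) h
      exact ⟨t, List.mem_cons_of_mem _ ht, hsept⟩

lemma refine_piece (hn : 2 ≤ n) {Y : Set E} (hYc : IsCompact Y) (hYtd : IsTotallyDisconnected Y)
    {a b : E} (haS : a ∈ Sp) (hbS : b ∈ Sp) (haY : a ∉ Y) (hbY : b ∉ Y)
    (hsep : Sep Y a b) {ε : ℝ} (hε : 0 < ε) :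
    ∃ Z : Set E, Z ⊆ Y ∧ IsCompact Z ∧ Sep Z a b ∧ Metric.diam Z ≤ ε := by
  haveI : CompactSpace Y := isCompact_iff_compactSpace.1 hYc
  haveI : TotallyDisconnectedSpace Y := totallyDisconnectedSpace_subtype_iff.2 hYtd
  have hcover : ∀ y : Y, ∃ V : Set Y, IsClopen V ∧ y ∈ V ∧ V ⊆ Metric.ball y (ε/2) :=
    fun y => compact_exists_isClopen_in_isOpen Metric.isOpen_ball
      (Metric.mem_ball_self (by linarith))
  choose V hVclopen hVmem hVsub using hcover
  obtain ⟨F, hF⟩ := isCompact_univ.elim_finite_subcover V (fun y => (hVclopen y).2)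
    (fun y _ => mem_iUnion.2 ⟨y, hVmem y⟩)
  set L0 : List (Set Y) := F.toList.map V with hL0
  have hL0clopen : ∀ s ∈ L0, IsClopen s := by
    intro s hs; rcases List.mem_map.1 hs with ⟨y, _, rfl⟩; exact hVclopen y
  have hL0cover : ∀ z : Y, z ∈ unions L0 := by
    intro z
    rcases mem_iUnion₂.1 (hF (mem_univ z)) with ⟨y, hyF, hzy⟩
    exact mem_unions.2 ⟨V y, List.mem_map.2 ⟨y, Finset.mem_toList.2 hyF, rfl⟩, hzy⟩
  set L1 : List (Set Y) := djfy L0 with hL1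
  set LA : List (Set E) := L1.map (fun W => Subtype.val '' W) with hLA
  have hLAcomp : ∀ s ∈ LA, IsCompact s := by
    intro s hs
    rcases List.mem_map.1 hs with ⟨W, hW, rfl⟩
    have hWc : IsClosed W := (djfy_clopen hL0clopen W hW).1
    exact hWc.isCompact.image continuous_subtype_val
  have hLApair : LA.Pairwise Disjoint := by
    rw [hLA, List.pairwise_map]
    exact djfy_pairwise.imp fun hAB => (disjoint_image_iff Subtype.val_injective).2 hAB
  have hLAunion : unions LA = Y := by
    rw [hLA, unions_map_image, hL1, djfy_unions, eq_univ_of_forall hL0cover, image_univ,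
      Subtype.range_val]
  have hdiam : ∀ s ∈ LA, Metric.diam s ≤ ε := by
    intro s hs
    rcases List.mem_map.1 hs with ⟨W, hW, rfl⟩
    obtain ⟨V0, hV0L0, hWV0⟩ := djfy_subset W hW
    rcases List.mem_map.1 hV0L0 with ⟨y, _, rfl⟩
    apply Metric.diam_le_of_forall_dist_le (le_of_lt hε)
    rintro z ⟨z', hz', rfl⟩ z2 ⟨z2', hz2', rfl⟩
    have h1 : dist z' y < ε/2 := Metric.mem_ball.1 (hVsub y (hWV0 hz'))
    have h2 : dist z2' y < ε/2 := Metric.mem_ball.1 (hVsub y (hWV0 hz2'))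
    rw [Subtype.dist_eq] at h1 h2
    have h3 := dist_triangle (z' : E) (y : E) (z2' : E)
    rw [dist_comm (y : E) (z2' : E)] at h3
    linarith
  have hsep' : Sep (unions LA) a b := by rw [hLAunion]; exact hsep
  obtain ⟨Z, hZL, hZsep⟩ := pbp_list hn haS hbS LA hLAcomp hLApair
    (by rw [hLAunion]; exact haY) (by rw [hLAunion]; exact hbY) hsep'
  refine ⟨Z, ?_, hLAcomp Z hZL, hZsep, hdiam Z hZL⟩
  rcases List.mem_map.1 hZL with ⟨W, _, rfl⟩
  rintro z ⟨z', _, rfl⟩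
  exact z'.2

lemma main (hn : 2 ≤ n) {X : Set E} (hXsub : X ⊆ Sp) (hXc : IsCompact X)
    (hXtd : IsTotallyDisconnected X) : IsConnected ((Sp : Set E) \ X) := by
  have hmem0 : (EuclideanSpace.single (⟨0, by omega⟩ : Fin (n+1)) (1:ℝ)) ∈ Sp := by
    rw [mem_Sp_iff, EuclideanSpace.norm_single]; norm_num
  have hmem1 : (EuclideanSpace.single (⟨1, by omega⟩ : Fin (n+1)) (1:ℝ)) ∈ Sp := by
    rw [mem_Sp_iff, EuclideanSpace.norm_single]; norm_num
  have hSne : ¬ (Sp : Set E) ⊆ X := by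
    intro hsub
    have hsing := hXtd Sp hsub (sphere_preconnected hn)
    have heq := hsing hmem0 hmem1
    have hv1 : (EuclideanSpace.single (⟨0, by omega⟩ : Fin (n+1)) (1:ℝ))
        (⟨1, by omega⟩ : Fin (n+1)) = 0 := by
      rw [EuclideanSpace.single_apply, if_neg]
      simp only [Fin.ext_iff]
      omega
    have hv2 : (EuclideanSpace.single (⟨1, by omega⟩ : Fin (n+1)) (1:ℝ))
        (⟨1, by omega⟩ : Fin (n+1)) = 1 := by
      rw [EuclideanSpace.single_apply, if_pos rfl]
    have hceq := congrArg (fun v : E => v (⟨1, by omega⟩ : Fin (n+1))) heq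
    simp only at hceq
    rw [hv1, hv2] at hceq
    norm_num at hceq
  obtain ⟨p₀, hp₀S, hp₀X⟩ := not_subset.1 hSne
  refine ⟨⟨p₀, hp₀S, hp₀X⟩, ?_⟩
  intro uu vv huu hvv hcov hne1 hne2
  by_contra hne
  rw [not_nonempty_iff_eq_empty] at hne
  obtain ⟨a, hau⟩ := hne1
  obtain ⟨b, hbv⟩ := hne2
  have haS : a ∈ Sp := hau.1.1
  have hbS : b ∈ Sp := hbv.1.1
  have haX : a ∉ X := hau.1.2
  have hbX : b ∉ X := hbv.1.2
  have hsepX : Sep X a b := ⟨uu, vv, huu, hvv, hcov, hau.2, hbv.2, hne⟩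
  have step : ∀ (Y : Set E), Y ⊆ X → IsCompact Y → Sep Y a b → ∀ k : ℕ,
      ∃ Z : Set E, Z ⊆ Y ∧ IsCompact Z ∧ Sep Z a b ∧ Metric.diam Z ≤ 1/(k+1) := by
    intro Y hYX hYc hYsep k
    exact refine_piece hn hYc (fun t ht hpc => hXtd t (ht.trans hYX) hpc) haS hbS
      (fun h => haX (hYX h)) (fun h => hbX (hYX h)) hYsep (by positivity)
  let Q : ℕ → {Y : Set E // Y ⊆ X ∧ IsCompact Y ∧ Sep Y a b} := fun k =>
    Nat.rec ⟨X, subset_rfl, hXc, hsepX⟩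
      (fun k prev =>
        ⟨Classical.choose (step prev.1 prev.2.1 prev.2.2.1 prev.2.2.2 k),
         (Classical.choose_spec (step prev.1 prev.2.1 prev.2.2.1 prev.2.2.2 k)).1.trans
           prev.2.1,
         (Classical.choose_spec (step prev.1 prev.2.1 prev.2.2.1 prev.2.2.2 k)).2.1,
         (Classical.choose_spec (step prev.1 prev.2.1 prev.2.2.1 prev.2.2.2 k)).2.2.1⟩) k
  have hQsucc : ∀ k : ℕ, (Q (k+1)).1 ⊆ (Q k).1 ∧ Metric.diam (Q (k+1)).1 ≤ 1/(k+1) := by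
    intro k
    have hspec := Classical.choose_spec (step (Q k).1 (Q k).2.1 (Q k).2.2.1 (Q k).2.2.2 k)
    exact ⟨hspec.1, hspec.2.2.2⟩
  have hQne : ∀ k, ((Q k).1).Nonempty := by
    intro k
    rcases (Q k).1.eq_empty_or_nonempty with h | h
    · exfalso
      have hsep := (Q k).2.2.2
      rw [h] at hsep
      exact not_sep_empty hn haS hbS hsep
    · exact h
  obtain ⟨p, hp⟩ := IsCompact.nonempty_iInter_of_sequence_nonempty_isCompact_isClosed
    (fun k => (Q k).1) (fun k => (hQsucc k).1) hQne (Q 0).2.2.1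
    (fun k => (Q k).2.2.1.isClosed)
  have hpk : ∀ k, p ∈ (Q k).1 := fun k => mem_iInter.1 hp k
  have hpX : p ∈ X := (Q 0).2.1 (hpk 0)
  have hpS : p ∈ Sp := hXsub hpX
  have hap : a ≠ p := fun h => haX (h ▸ hpX)
  have hbp : b ≠ p := fun h => hbX (h ▸ hpX)
  obtain ⟨γ, hγ⟩ := joined_compl_point hpS haS hbS hap hbp
  set K : Set E := range (γ : unitInterval → E) with hK
  have hKc : IsCompact K := isCompact_range γ.continuous
  have hKS : ∀ z ∈ K, z ∈ Sp ∧ z ≠ p := by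
    rintro z ⟨t, rfl⟩
    exact ⟨(hγ t).1, (hγ t).2⟩
  have hpK : p ∉ K := fun h => (hKS p h).2 rfl
  have hdK : 0 < infDist p K := by
    have hKcl : IsClosed K := hKc.isClosed
    have hKne : K.Nonempty := ⟨a, 0, γ.source⟩
    have h0 : infDist p K ≠ 0 := by
      intro h
      apply hpK
      rw [← hKcl.closure_eq]
      exact (mem_closure_iff_infDist_zero hKne).2 h
    exact lt_of_le_of_ne infDist_nonneg (Ne.symm h0)
  obtain ⟨N, hN⟩ := exists_nat_gt (1 / infDist p K)
  have hNpos : 0 < (N:ℝ) := lt_trans (by positivity) hN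
  have hlt : 1/((N:ℝ)+1) < infDist p K := by
    rw [div_lt_iff₀ (by positivity)]
    rw [div_lt_iff₀ hdK] at hN
    nlinarith
  have hdisjK : ∀ z ∈ K, z ∉ (Q (N+1)).1 := by
    intro z hz hzQ
    have h1 : dist z p ≤ Metric.diam (Q (N+1)).1 :=
      Metric.dist_le_diam_of_mem (Q (N+1)).2.2.1.isBounded hzQ (hpk (N+1))
    have h2 : Metric.diam (Q (N+1)).1 ≤ 1/((N:ℝ)+1) := by
      have := (hQsucc N).2
      push_cast at this ⊢
      linarith
    have h3 : infDist p K ≤ dist p z := infDist_le_dist_of_mem hz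
    rw [dist_comm p z] at h3
    linarith
  obtain ⟨u', v', hu', hv', hcov', hau', hbv', hdis'⟩ := (Q (N+1)).2.2.2
  have hKsub : K ⊆ u' ∪ v' := fun z hz => hcov' ⟨(hKS z hz).1, hdisjK z hz⟩
  have hKconn : IsPreconnected K := (isConnected_range γ.continuous).isPreconnected
  obtain ⟨z, hz⟩ := hKconn u' v' hu' hv' hKsub ⟨a, ⟨0, γ.source⟩, hau'⟩ ⟨b, ⟨1, γ.target⟩, hbv'⟩
  have hzfin : z ∈ ((Sp \ (Q (N+1)).1 : Set E)) ∩ (u' ∩ v') :=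
    ⟨⟨(hKS z hz.1).1, hdisjK z hz.1⟩, hz.2⟩
  rw [hdis'] at hzfin
  exact hzfin

end Sphere

end CantorSphereProof

end

/-- A Cantor set in a topological space: a nonempty, compact, perfect
(no isolated points), totally disconnected subset. -/
def IsCantorSet {α : Type*} [TopologicalSpace α] (X : Set α) : Prop :=
  X.Nonempty ∧ IsCompact X ∧ Perfect X ∧ IsTotallyDisconnected X

/-- If `n ≥ 2` and `X` is a Cantor set contained in the unit sphere `S^n ⊆ ℝ^{n+1}`,
then `S^n \ X` is connected. -/
theorem sphere_diff_cantorSet_isConnected (n : ℕ) (hn : 2 ≤ n)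
    (X : Set (EuclideanSpace ℝ (Fin (n + 1))))
    (hXsub : X ⊆ Metric.sphere (0 : EuclideanSpace ℝ (Fin (n + 1))) 1)
    (hX : IsCantorSet X) :
    IsConnected (Metric.sphere (0 : EuclideanSpace ℝ (Fin (n + 1))) 1 \ X) := by
  exact CantorSphereProof.main hn hXsub hX.2.1 hX.2.2.2
end

section
/- Let n ≥ 2 and let f : ℝ^n → ℝ^n be continuous with f(0) = 0. Suppose (s_k) is a sequence of positive real numbers with s_k → 0 such that the maps x ↦ f(s_k x)/s_k converge locally uniformly on ℝ^n to a map φ : ℝ^n → ℝ^n. Let (r_j) be an increasing sequence of positive real numbers with r_j → ∞, and suppose that the maps x ↦ φ(r_j x)/r_j converge locally uniformly on ℝ^n to a map φ₀ : ℝ^n → ℝ^n. Then there exists a sequence (t_k) of positive real numbers with t_k → 0 such that the maps x ↦ f(t_k x)/t_k converge locally uniformly on ℝ^n to φ₀. -/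
open Filter Metric

/-- Rescaling blow-up limits: if `φ` is a locally uniform blow-up limit of `f` at `0`
along `s_k → 0`, and `φ₀` is a locally uniform limit of `x ↦ φ(r_j x)/r_j` for an
increasing sequence `r_j → ∞`, then `φ₀` is also a blow-up limit of `f` at `0`. -/
theorem rescale_generalized_derivative_atTop (n : ℕ) (hn : 2 ≤ n)
    (f φ φ₀ : EuclideanSpace ℝ (Fin n) → EuclideanSpace ℝ (Fin n))
    (hf : Continuous f) (hf0 : f 0 = 0)
    (s : ℕ → ℝ) (hs_pos : ∀ k, 0 < s k) (hs : Tendsto s atTop (nhds 0))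
    (hconv : TendstoLocallyUniformly (fun k x => (s k)⁻¹ • f (s k • x)) φ atTop)
    (r : ℕ → ℝ) (hr_pos : ∀ j, 0 < r j) (hr_mono : StrictMono r)
    (hr : Tendsto r atTop atTop)
    (hconv' : TendstoLocallyUniformly (fun j x => (r j)⁻¹ • φ (r j • x)) φ₀ atTop) :
    ∃ t : ℕ → ℝ, (∀ k, 0 < t k) ∧ Tendsto t atTop (nhds 0) ∧
      TendstoLocallyUniformly (fun k x => (t k)⁻¹ • f (t k • x)) φ₀ atTop := by
  -- For each j, choose k j so that the blow-up of f along s (k j) approximates φ well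
  -- on the ball of radius (j+1) * r j, and s (k j) * r j ≤ 1/(j+1).
  have key : ∀ j : ℕ, ∃ k : ℕ,
      (∀ x ∈ closedBall (0 : EuclideanSpace ℝ (Fin n)) ((j + 1) * r j),
        dist (φ x) ((s k)⁻¹ • f (s k • x)) < r j / (j + 1)) ∧ s k * r j ≤ 1 / (j + 1) := by
    intro j
    have hK : TendstoUniformlyOn (fun k x => (s k)⁻¹ • f (s k • x)) φ atTop
        (closedBall (0 : EuclideanSpace ℝ (Fin n)) ((j + 1) * r j)) :=
      (tendstoLocallyUniformly_iff_forall_isCompact.1 hconv) _ (isCompact_closedBall _ _)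
    have hε : (0 : ℝ) < r j / (j + 1) :=
      div_pos (hr_pos j) (by positivity)
    have h1 := (Metric.tendstoUniformlyOn_iff.1 hK) _ hε
    have h2 : ∀ᶠ k in atTop, s k * r j ≤ 1 / (j + 1) := by
      have hδ : (0 : ℝ) < 1 / ((j + 1) * r j) := one_div_pos.2 (mul_pos (by positivity) (hr_pos j))
      have := (hs.eventually (gt_mem_nhds hδ))
      filter_upwards [this] with k hk
      have hrj := hr_pos j
      rw [div_mul_eq_div_div] at hk
      calc s k * r j ≤ (1 / (j + 1) / r j) * r j := by
            apply mul_le_mul_of_nonneg_right hk.le hrj.le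
        _ = 1 / (j + 1) := by field_simp
    exact (h1.and h2).exists
  choose k hk1 hk2 using key
  refine ⟨fun j => s (k j) * r j, fun j => mul_pos (hs_pos _) (hr_pos j), ?_, ?_⟩
  · exact squeeze_zero (fun j => (mul_pos (hs_pos _) (hr_pos j)).le) hk2
      tendsto_one_div_add_atTop_nhds_zero_nat
  · rw [tendstoLocallyUniformly_iff_forall_isCompact]
    intro K hK
    obtain ⟨R, hR⟩ := hK.isBounded.subset_closedBall 0
    rw [Metric.tendstoUniformlyOn_iff]
    intro ε hε
    have hc := (Metric.tendstoUniformlyOn_iff.1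
      ((tendstoLocallyUniformly_iff_forall_isCompact.1 hconv') K hK)) (ε / 2) (half_pos hε)
    have hsmall : ∀ᶠ j : ℕ in atTop, (1 : ℝ) / (j + 1) < ε / 2 := by
      have := tendsto_one_div_add_atTop_nhds_zero_nat (𝕜 := ℝ)
      exact this.eventually (gt_mem_nhds (half_pos hε))
    have hbig : ∀ᶠ j : ℕ in atTop, R ≤ (j : ℝ) + 1 := by
      filter_upwards [(tendsto_natCast_atTop_atTop (R := ℝ)).eventually_ge_atTop R] with j hj
      linarith
    filter_upwards [hc, hsmall, hbig] with j hj hsj hbj x hx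
    have hxR : ‖x‖ ≤ R := by
      have := hR hx; rwa [mem_closedBall, dist_zero_right] at this
    -- the rescaled point r j • x lies in the big ball
    have hmem : r j • x ∈ closedBall (0 : EuclideanSpace ℝ (Fin n)) ((j + 1) * r j) := by
      rw [mem_closedBall, dist_zero_right, norm_smul, Real.norm_eq_abs,
        abs_of_pos (hr_pos j), mul_comm]
      exact mul_le_mul_of_nonneg_right (hxR.trans hbj) (hr_pos j).le
    have hd := hk1 j (r j • x) hmem
    have heq : (s (k j) * r j)⁻¹ • f ((s (k j) * r j) • x)
        = (r j)⁻¹ • ((s (k j))⁻¹ • f (s (k j) • (r j • x))) := by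
      rw [smul_smul, smul_smul, mul_inv, mul_comm ((s (k j))⁻¹)]
    have hd2 : dist ((r j)⁻¹ • φ (r j • x)) ((s (k j) * r j)⁻¹ • f ((s (k j) * r j) • x))
        < 1 / (j + 1) := by
      rw [heq, dist_smul₀, Real.norm_eq_abs, abs_inv, abs_of_pos (hr_pos j)]
      calc (r j)⁻¹ * dist (φ (r j • x)) ((s (k j))⁻¹ • f (s (k j) • (r j • x)))
          < (r j)⁻¹ * (r j / (j + 1)) := by
            exact mul_lt_mul_of_pos_left hd (inv_pos.2 (hr_pos j))
        _ = 1 / (j + 1) := by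
              rw [inv_mul_eq_div, div_div, mul_comm, ← div_div, div_self (hr_pos j).ne']
    calc dist (φ₀ x) ((s (k j) * r j)⁻¹ • f ((s (k j) * r j) • x))
        ≤ dist (φ₀ x) ((r j)⁻¹ • φ (r j • x))
          + dist ((r j)⁻¹ • φ (r j • x)) ((s (k j) * r j)⁻¹ • f ((s (k j) * r j) • x)) :=
          dist_triangle _ _ _
      _ < ε / 2 + ε / 2 := add_lt_add (hj x hx) (hd2.trans_le hsj.le)
      _ = ε := add_halves ε
end

section
/- Let n ≥ 2 and let f : ℝ^n → ℝ^n be continuous with f(0) = 0. Suppose (s_k) is a sequence of positive real numbers with s_k → 0 such that the maps x ↦ f(s_k x)/s_k converge locally uniformly on ℝ^n to a map φ : ℝ^n → ℝ^n. Let (r_j) be a decreasing sequence of positive real numbers with r_j → 0, and suppose that the maps x ↦ φ(r_j x)/r_j converge locally uniformly on ℝ^n to a map φ₀ : ℝ^n → ℝ^n. Then there exists a sequence (t_k) of positive real numbers with t_k → 0 such that the maps x ↦ f(t_k x)/t_k converge locally uniformly on ℝ^n to φ₀. -/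
open Filter Metric

/-- Rescaling blow-up limits: if `φ` is a locally uniform blow-up limit of `f` at `0`
along `s_k → 0`, and `φ₀` is a locally uniform limit of `x ↦ φ(r_j x)/r_j` for a
decreasing sequence `r_j → 0`, then `φ₀` is also a blow-up limit of `f` at `0`. -/
theorem rescale_generalized_derivative_atZero (n : ℕ) (hn : 2 ≤ n)
    (f φ φ₀ : EuclideanSpace ℝ (Fin n) → EuclideanSpace ℝ (Fin n))
    (hf : Continuous f) (hf0 : f 0 = 0)
    (s : ℕ → ℝ) (hs_pos : ∀ k, 0 < s k) (hs : Tendsto s atTop (nhds 0))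
    (hconv : TendstoLocallyUniformly (fun k x => (s k)⁻¹ • f (s k • x)) φ atTop)
    (r : ℕ → ℝ) (hr_pos : ∀ j, 0 < r j) (hr_anti : StrictAnti r)
    (hr : Tendsto r atTop (nhds 0))
    (hconv' : TendstoLocallyUniformly (fun j x => (r j)⁻¹ • φ (r j • x)) φ₀ atTop) :
    ∃ t : ℕ → ℝ, (∀ k, 0 < t k) ∧ Tendsto t atTop (nhds 0) ∧
      TendstoLocallyUniformly (fun k x => (t k)⁻¹ • f (t k • x)) φ₀ atTop := by
  rw [tendstoLocallyUniformly_iff_forall_isCompact] at hconv hconv'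
  -- Step 1: for each j, uniform convergence (in k) of the doubly rescaled maps
  have step1 : ∀ j : ℕ, ∃ N : ℕ, ∀ k ≥ N,
      ∀ x ∈ closedBall (0 : EuclideanSpace ℝ (Fin n)) (j+1),
      dist ((r j)⁻¹ • φ (r j • x)) ((r j * s k)⁻¹ • f ((r j * s k) • x))
        < 1 / (j+1) := by
    intro j
    have hK : IsCompact (closedBall (0 : EuclideanSpace ℝ (Fin n)) (r j * (j+1))) :=
      isCompact_closedBall _ _
    have h := (Metric.tendstoUniformlyOn_iff.1 (hconv _ hK)) (r j * (1 / (j+1)))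
      (mul_pos (hr_pos j) (by positivity))
    rcases eventually_atTop.1 h with ⟨N, hN⟩
    refine ⟨N, fun k hk x hx => ?_⟩
    have hy : (r j) • x ∈ closedBall (0 : EuclideanSpace ℝ (Fin n)) (r j * (j+1)) := by
      simp only [mem_closedBall, dist_zero_right] at hx ⊢
      rw [norm_smul, Real.norm_eq_abs, abs_of_pos (hr_pos j)]
      exact mul_le_mul_of_nonneg_left hx (hr_pos j).le
    have key := hN k hk _ hy
    have heq : (r j * s k)⁻¹ • f ((r j * s k) • x)
        = (r j)⁻¹ • ((s k)⁻¹ • f (s k • (r j • x))) := by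
      rw [smul_smul, smul_smul, mul_comm (r j) (s k)]
      ring_nf
    rw [heq, dist_smul₀, Real.norm_eq_abs, abs_of_pos (inv_pos.2 (hr_pos j))]
    calc (r j)⁻¹ * dist (φ (r j • x)) ((s k)⁻¹ • f (s k • r j • x))
        < (r j)⁻¹ * (r j * (1 / (j+1))) :=
          mul_lt_mul_of_pos_left key (inv_pos.2 (hr_pos j))
      _ = 1 / (j+1) := inv_mul_cancel_left₀ (hr_pos j).ne' _
  choose N hN using step1
  -- the diagonal sequence
  set m : ℕ → ℕ := fun j => max (N j) j with hm
  refine ⟨fun j => r j * s (m j), fun j => mul_pos (hr_pos j) (hs_pos _), ?_, ?_⟩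
  · have hmt : Tendsto m atTop atTop :=
      tendsto_atTop_mono (fun j => le_max_right (N j) j) tendsto_id
    have := hr.mul (hs.comp hmt)
    simpa using this
  · rw [tendstoLocallyUniformly_iff_forall_isCompact]
    intro K hK
    rw [Metric.tendstoUniformlyOn_iff]
    intro ε hε
    obtain ⟨R, hR⟩ := hK.isBounded.subset_closedBall 0
    obtain ⟨J, hJ⟩ := exists_nat_ge R
    have h1 := (Metric.tendstoUniformlyOn_iff.1
      (hconv' _ (isCompact_closedBall (0 : EuclideanSpace ℝ (Fin n)) J))) (ε/2)
      (half_pos hε)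
    have h2 : ∀ᶠ j : ℕ in atTop, (1 : ℝ) / (j+1) < ε/2 :=
      tendsto_one_div_add_atTop_nhds_zero_nat.eventually (gt_mem_nhds (half_pos hε))
    have h3 : ∀ᶠ j : ℕ in atTop, (J : ℝ) ≤ j :=
      eventually_atTop.2 ⟨J, fun j hj => by exact_mod_cast hj⟩
    filter_upwards [h1, h2, h3] with j hj1 hj2 hj3
    intro x hxK
    have hxJ : x ∈ closedBall (0 : EuclideanSpace ℝ (Fin n)) J :=
      (closedBall_subset_closedBall hJ) (hR hxK)
    have hxj : x ∈ closedBall (0 : EuclideanSpace ℝ (Fin n)) (j+1) :=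
      (closedBall_subset_closedBall (by linarith)) hxJ
    have hA := hN j (m j) (le_max_left _ _) x hxj
    calc dist (φ₀ x) ((r j * s (m j))⁻¹ • f ((r j * s (m j)) • x))
        ≤ dist (φ₀ x) ((r j)⁻¹ • φ (r j • x))
          + dist ((r j)⁻¹ • φ (r j • x)) ((r j * s (m j))⁻¹ • f ((r j * s (m j)) • x)) :=
          dist_triangle _ _ _
      _ < ε/2 + 1/(j+1) := add_lt_add (hj1 x hxJ) hA
      _ < ε/2 + ε/2 := by linarith
      _ = ε := add_halves ε
end

section
/- Let L, F, Φ : ℝ³ → ℝ³ be continuous maps and let C₁ > 0, β > 1, C₃ > 1 and R₀ > 0 be constants such that: (1) F ∘ L = L ∘ Φ on ℝ³; (2) |Φ(x)| ≤ C₃·|x| for all x ∈ ℝ³; (3) |F(x)| ≥ C₁·|x|^β for all x with |x| > R₀; (4) M(r, L) → ∞ as r → ∞. Then there exists R₁ > 0 such that for every r > R₁ and every integer m ≥ 1, log M(C₃^m · r, L) ≥ log M(r, L) · ∏_{i=1}^{m−1} ( β + (log C₁)/(log M(C₃^i · r, L)) ), where the product is interpreted as 1 when m = 1. -/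
/-- The maximum modulus of `g : ℝ³ → ℝ³` over the closed ball of radius `r`
centered at the origin. -/
noncomputable def maxMod (g : EuclideanSpace ℝ (Fin 3) → EuclideanSpace ℝ (Fin 3))
    (r : ℝ) : ℝ :=
  sSup ((fun x => ‖g x‖) '' Metric.closedBall (0 : EuclideanSpace ℝ (Fin 3)) r)

private lemma le_maxMod {L : EuclideanSpace ℝ (Fin 3) → EuclideanSpace ℝ (Fin 3)}
    (hL : Continuous L) {r : ℝ} {y : EuclideanSpace ℝ (Fin 3)} (hy : ‖y‖ ≤ r) :
    ‖L y‖ ≤ maxMod L r := by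
  apply le_csSup
  · exact ((isCompact_closedBall (0 : EuclideanSpace ℝ (Fin 3)) r).image hL.norm).bddAbove
  · exact ⟨y, by simpa [Metric.mem_closedBall, dist_zero_right] using hy, rfl⟩

private lemma exists_maxMod {L : EuclideanSpace ℝ (Fin 3) → EuclideanSpace ℝ (Fin 3)}
    (hL : Continuous L) {r : ℝ} (hr : 0 ≤ r) :
    ∃ x : EuclideanSpace ℝ (Fin 3), ‖x‖ ≤ r ∧ maxMod L r = ‖L x‖ := by
  obtain ⟨x, hx, hmax⟩ := (isCompact_closedBall (0 : EuclideanSpace ℝ (Fin 3)) r).exists_isMaxOn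
    ⟨0, by simp [hr]⟩ hL.norm.continuousOn
  refine ⟨x, by simpa [Metric.mem_closedBall, dist_zero_right] using hx, ?_⟩
  refine IsGreatest.csSup_eq ⟨⟨x, hx, rfl⟩, ?_⟩
  rintro y ⟨z, hz, rfl⟩
  exact hmax hz

private lemma maxMod_mono {L : EuclideanSpace ℝ (Fin 3) → EuclideanSpace ℝ (Fin 3)}
    (hL : Continuous L) {r s : ℝ} (hr : 0 ≤ r) (hrs : r ≤ s) :
    maxMod L r ≤ maxMod L s := by
  apply csSup_le_csSup
  · exact ((isCompact_closedBall (0 : EuclideanSpace ℝ (Fin 3)) s).image hL.norm).bddAbove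
  · exact ⟨‖L 0‖, 0, by simp [hr], rfl⟩
  · exact Set.image_mono (Metric.closedBall_subset_closedBall hrs)

/-- Regular growth of a linearizer (Lemma 4.1): under the functional equation
`F ∘ L = L ∘ Φ`, a linear bound on `Φ`, a polynomial-type lower bound on `F` and
`M(r, L) → ∞`, there is `R₁ > 0` such that for `r > R₁` and `m ≥ 1`,
`log M(C₃^m r, L) ≥ log M(r, L) · ∏_{i=1}^{m-1} (β + log C₁ / log M(C₃^i r, L))`. -/
theorem linearizer_regular_growth
    (L F Φ : EuclideanSpace ℝ (Fin 3) → EuclideanSpace ℝ (Fin 3))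
    (hL : Continuous L) (hF : Continuous F) (hΦ : Continuous Φ)
    (C₁ β C₃ R₀ : ℝ) (hC₁ : 0 < C₁) (hβ : 1 < β) (hC₃ : 1 < C₃) (hR₀ : 0 < R₀)
    (hfun : ∀ x, F (L x) = L (Φ x))
    (hΦbound : ∀ x, ‖Φ x‖ ≤ C₃ * ‖x‖)
    (hFgrowth : ∀ x : EuclideanSpace ℝ (Fin 3), R₀ < ‖x‖ → C₁ * ‖x‖ ^ β ≤ ‖F x‖)
    (hLgrowth : Filter.Tendsto (fun r => maxMod L r) Filter.atTop Filter.atTop) :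
    ∃ R₁ : ℝ, 0 < R₁ ∧ ∀ r : ℝ, R₁ < r → ∀ m : ℕ, 1 ≤ m →
      Real.log (maxMod L r) *
          ∏ i ∈ Finset.Icc 1 (m - 1),
            (β + Real.log C₁ / Real.log (maxMod L (C₃ ^ i * r)))
        ≤ Real.log (maxMod L (C₃ ^ m * r)) := by
  -- the key growth step
  have key : ∀ r : ℝ, 0 ≤ r → R₀ < maxMod L r →
      C₁ * (maxMod L r) ^ β ≤ maxMod L (C₃ * r) := by
    intro r hr hM
    obtain ⟨x, hx, hMx⟩ := exists_maxMod hL hr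
    have h1 : ‖Φ x‖ ≤ C₃ * r :=
      (hΦbound x).trans (mul_le_mul_of_nonneg_left hx (by linarith))
    calc C₁ * (maxMod L r) ^ β = C₁ * ‖L x‖ ^ β := by rw [hMx]
      _ ≤ ‖F (L x)‖ := hFgrowth _ (hMx ▸ hM)
      _ = ‖L (Φ x)‖ := by rw [hfun]
      _ ≤ maxMod L (C₃ * r) := le_maxMod hL h1
  set T : ℝ := max 1 (|Real.log C₁| / (β - 1)) with hT
  have hT1 : (1 : ℝ) ≤ T := le_max_left _ _
  set K : ℝ := max (R₀ + 1) (Real.exp T) with hK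
  obtain ⟨R₁', hR₁'⟩ := Filter.eventually_atTop.mp (hLgrowth.eventually_ge_atTop K)
  refine ⟨max R₁' 1, lt_of_lt_of_le one_pos (le_max_right _ _), fun r hr m hm => ?_⟩
  have hrpos : 0 < r := by have h := le_max_right R₁' 1; linarith
  have hpow : ∀ i : ℕ, r ≤ C₃ ^ i * r := by
    intro i
    nlinarith [one_le_pow₀ hC₃.le (n := i), pow_pos (lt_trans one_pos hC₃) i]
  have hMK : ∀ i : ℕ, K ≤ maxMod L (C₃ ^ i * r) := by
    intro i
    exact hR₁' _ (le_trans (le_trans (le_max_left R₁' 1) hr.le) (hpow i))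
  have hMpos : ∀ i : ℕ, 0 < maxMod L (C₃ ^ i * r) := fun i =>
    lt_of_lt_of_le (lt_of_lt_of_le (Real.exp_pos T) (le_max_right _ _)) (hMK i)
  have hMR₀ : ∀ i : ℕ, R₀ < maxMod L (C₃ ^ i * r) := by
    intro i
    have h := hMK i
    have h2 : R₀ + 1 ≤ K := le_max_left _ _
    linarith
  have haT : ∀ i : ℕ, T ≤ Real.log (maxMod L (C₃ ^ i * r)) := by
    intro i
    calc T = Real.log (Real.exp T) := (Real.log_exp T).symm
      _ ≤ Real.log (maxMod L (C₃ ^ i * r)) :=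
        Real.log_le_log (Real.exp_pos T) (le_trans (le_max_right _ _) (hMK i))
  have hapos : ∀ i : ℕ, 0 < Real.log (maxMod L (C₃ ^ i * r)) := fun i =>
    lt_of_lt_of_le (lt_of_lt_of_le one_pos hT1) (haT i)
  -- the key step in log form
  have hstep : ∀ i : ℕ,
      β * Real.log (maxMod L (C₃ ^ i * r)) + Real.log C₁ ≤
        Real.log (maxMod L (C₃ ^ (i + 1) * r)) := by
    intro i
    have hrad : (0:ℝ) ≤ C₃ ^ i * r := le_trans hrpos.le (hpow i)
    have hkey := key _ hrad (hMR₀ i)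
    have heq : C₃ ^ (i + 1) * r = C₃ * (C₃ ^ i * r) := by ring
    rw [heq]
    calc β * Real.log (maxMod L (C₃ ^ i * r)) + Real.log C₁
        = Real.log (C₁ * (maxMod L (C₃ ^ i * r)) ^ β) := by
          rw [Real.log_mul hC₁.ne' (Real.rpow_pos_of_pos (hMpos i) β).ne',
            Real.log_rpow (hMpos i)]; ring
      _ ≤ Real.log (maxMod L (C₃ * (C₃ ^ i * r))) :=
          Real.log_le_log (mul_pos hC₁ (Real.rpow_pos_of_pos (hMpos i) β)) hkey
  -- the factors are nonnegative
  have hfac : ∀ i : ℕ, 0 ≤ β + Real.log C₁ / Real.log (maxMod L (C₃ ^ i * r)) := by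
    intro i
    have hai := hapos i
    have h1 : |Real.log C₁| ≤ (β - 1) * Real.log (maxMod L (C₃ ^ i * r)) := by
      have h2 : |Real.log C₁| / (β - 1) ≤ Real.log (maxMod L (C₃ ^ i * r)) :=
        le_trans (le_max_right 1 _) (haT i)
      have hb : (0:ℝ) < β - 1 := by linarith
      calc |Real.log C₁| = (β - 1) * (|Real.log C₁| / (β - 1)) := by field_simp
        _ ≤ (β - 1) * Real.log (maxMod L (C₃ ^ i * r)) :=
          mul_le_mul_of_nonneg_left h2 hb.le
    have h3 : -(β - 1) ≤ Real.log C₁ / Real.log (maxMod L (C₃ ^ i * r)) := by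
      rw [neg_le, ← neg_div, div_le_iff₀ hai]
      have h4 := neg_le_abs (Real.log C₁)
      linarith
    linarith
  -- base fact : log M(r) = log M(C₃^0 r)
  have ha0 : Real.log (maxMod L r) = Real.log (maxMod L (C₃ ^ 0 * r)) := by
    norm_num
  -- induction on m
  induction m, hm using Nat.le_induction with
  | base =>
    simp only [Nat.sub_self, Finset.Icc_eq_empty_of_lt (Nat.lt_irrefl 1 |> absurd · id)]
    have : Finset.Icc 1 0 = (∅ : Finset ℕ) := by decide
    rw [this, Finset.prod_empty, mul_one]
    have hmono : maxMod L r ≤ maxMod L (C₃ ^ 1 * r) := maxMod_mono hL hrpos.le (hpow 1)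
    have hMrpos : 0 < maxMod L r := by
      have := hMpos 0; simpa using this
    exact Real.log_le_log hMrpos hmono
  | succ m hm ih =>
    have hm1 : m - 1 + 1 = m := Nat.succ_pred_eq_of_pos hm
    have hprod : ∏ i ∈ Finset.Icc 1 (m + 1 - 1),
        (β + Real.log C₁ / Real.log (maxMod L (C₃ ^ i * r)))
        = (∏ i ∈ Finset.Icc 1 (m - 1),
            (β + Real.log C₁ / Real.log (maxMod L (C₃ ^ i * r)))) *
          (β + Real.log C₁ / Real.log (maxMod L (C₃ ^ m * r))) := by
      rw [Nat.add_sub_cancel, ← hm1, Finset.prod_Icc_succ_top (by omega), hm1]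
    rw [hprod, ← mul_assoc]
    have ham := hapos m
    calc Real.log (maxMod L r) *
          (∏ i ∈ Finset.Icc 1 (m - 1),
            (β + Real.log C₁ / Real.log (maxMod L (C₃ ^ i * r)))) *
          (β + Real.log C₁ / Real.log (maxMod L (C₃ ^ m * r)))
        ≤ Real.log (maxMod L (C₃ ^ m * r)) *
          (β + Real.log C₁ / Real.log (maxMod L (C₃ ^ m * r))) :=
          mul_le_mul_of_nonneg_right ih (hfac m)
      _ = β * Real.log (maxMod L (C₃ ^ m * r)) + Real.log C₁ := by
          field_simp
      _ ≤ Real.log (maxMod L (C₃ ^ (m + 1) * r)) := hstep m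
end
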